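/- arXiv:math/0610540 — 4 statements merged into one kernel-verified Lean document; each statement's English description precedes it below -/
import Mathlib

section
/- Let ζ ≥ 0 and A > 0, and let λ be a partition whose number of rows and number of columns are both at most A. Then for every integer k ≥ 2, the shifted Boolean cumulant of λ with respect to the shift ζ satisfies |B̃_k| ≤ (2(A+ζ))^k / 2. -/
open scoped BigOperators

namespace ShiftedBooleanAux

open Finset Polynomial

/-! ### Generic partial-fraction / power series machinery -/

section Generic

variable {n : ℕ} (tv : Fin (n+1) → ℝ) (sv : Fin n → ℝ)

/-- Lagrange / partial fraction weights. -/
noncomputable def pc (k : Fin (n+1)) : ℝ :=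
  (∏ i, (tv k - sv i)) * ∏ j ∈ Finset.univ.erase k, (tv k - tv j)⁻¹

lemma zident (hinj : Set.InjOn tv ↑(Finset.univ : Finset (Fin (n+1)))) :
    (∏ i : Fin n, (X - C (sv i))) =
      ∑ k : Fin (n+1), C (pc tv sv k) * ∏ j ∈ Finset.univ.erase k, (X - C (tv j)) := by
  set f : ℝ[X] := ∏ i : Fin n, (X - C (sv i)) with hf
  have hmonic : f.Monic := monic_prod_of_monic _ _ fun i _ => monic_X_sub_C _
  have hdeg : f.natDegree = n := by
    rw [hf, natDegree_prod_of_monic _ _ fun i _ => monic_X_sub_C _]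
    simp [natDegree_X_sub_C]
  have hdlt : f.degree < (Finset.univ : Finset (Fin (n+1))).card := by
    rw [degree_eq_natDegree hmonic.ne_zero, hdeg]
    rw [Finset.card_univ, Fintype.card_fin]
    exact_mod_cast Nat.lt_succ_self n
  have h := Lagrange.eq_interpolate hinj hdlt
  rw [Lagrange.interpolate_apply] at h
  rw [h]
  refine Finset.sum_congr rfl fun k _ => ?_
  rw [Lagrange.basis]
  have heval : f.eval (tv k) = ∏ i, (tv k - sv i) := by
    rw [hf, eval_prod]
    exact Finset.prod_congr rfl fun i _ => by simp
  have hbd : ∀ j ∈ Finset.univ.erase k, Lagrange.basisDivisor (tv k) (tv j)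
      = C (tv k - tv j)⁻¹ * (X - C (tv j)) := fun j _ => rfl
  rw [Finset.prod_congr rfl hbd, Finset.prod_mul_distrib, ← map_prod, heval, pc,
    ← mul_assoc, ← map_mul]

lemma psum (hinj : Set.InjOn tv ↑(Finset.univ : Finset (Fin (n+1)))) :
    ∑ k, pc tv sv k = 1 := by
  have h := congrArg (fun p : ℝ[X] => p.coeff n) (zident tv sv hinj)
  have hL : (∏ i : Fin n, (X - C (sv i))).coeff n = 1 := by
    have hmonic : (∏ i : Fin n, (X - C (sv i))).Monic :=
      monic_prod_of_monic _ _ fun i _ => monic_X_sub_C _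
    have hdeg : (∏ i : Fin n, (X - C (sv i))).natDegree = n := by
      rw [natDegree_prod_of_monic _ _ fun i _ => monic_X_sub_C _]
      simp [natDegree_X_sub_C]
    have := hmonic.coeff_natDegree
    rwa [hdeg] at this
  have hR : ∀ k : Fin (n+1),
      (∏ j ∈ Finset.univ.erase k, (X - C (tv j))).coeff n = 1 := by
    intro k
    have hmonic : (∏ j ∈ Finset.univ.erase k, (X - C (tv j))).Monic :=
      monic_prod_of_monic _ _ fun i _ => monic_X_sub_C _
    have hdeg : (∏ j ∈ Finset.univ.erase k, (X - C (tv j))).natDegree = n := by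
      rw [natDegree_prod_of_monic _ _ fun i _ => monic_X_sub_C _]
      simp [natDegree_X_sub_C, Finset.card_erase_of_mem]
    have := hmonic.coeff_natDegree
    rwa [hdeg] at this
  rw [hL, finset_sum_coeff] at h
  calc ∑ k, pc tv sv k
      = ∑ k : Fin (n+1), (C (pc tv sv k) * ∏ j ∈ Finset.univ.erase k, (X - C (tv j))).coeff n :=
        Finset.sum_congr rfl fun k _ => by rw [coeff_C_mul, hR k, mul_one]
    _ = 1 := h.symm

lemma xident (hinj : Set.InjOn tv ↑(Finset.univ : Finset (Fin (n+1)))) (ζ : ℝ) :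
    (∏ i : Fin n, (1 - C (sv i - ζ) * X)) =
      ∑ k : Fin (n+1), C (pc tv sv k) *
        ∏ j ∈ Finset.univ.erase k, (1 - C (tv j - ζ) * X) := by
  apply eq_of_infinite_eval_eq
  apply Set.Infinite.mono (s := Set.Ioi (0:ℝ)) ?_ (Set.Ioi_infinite 0)
  intro x hx
  have hx0 : x ≠ 0 := ne_of_gt hx
  have key : ∀ c : ℝ, 1 - (c - ζ) * x = x * (x⁻¹ + ζ - c) := by
    intro c; field_simp; ring
  have hz := congrArg (Polynomial.eval (x⁻¹ + ζ)) (zident tv sv hinj)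
  simp only [eval_prod, eval_finset_sum, eval_mul, eval_sub, eval_X, eval_C] at hz
  show Polynomial.eval x _ = Polynomial.eval x _
  simp only [eval_prod, eval_finset_sum, eval_mul, eval_sub, eval_one, eval_X, eval_C]
  calc ∏ i : Fin n, (1 - (sv i - ζ) * x)
      = ∏ i : Fin n, (x * (x⁻¹ + ζ - sv i)) := Finset.prod_congr rfl fun i _ => key _
    _ = x ^ n * ∏ i : Fin n, (x⁻¹ + ζ - sv i) := by
        rw [Finset.prod_mul_distrib, Finset.prod_const, Finset.card_univ, Fintype.card_fin]
    _ = x ^ n * ∑ k : Fin (n+1), pc tv sv k * ∏ j ∈ Finset.univ.erase k, (x⁻¹ + ζ - tv j) := by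
        rw [hz]
    _ = ∑ k : Fin (n+1), pc tv sv k * ∏ j ∈ Finset.univ.erase k, (1 - (tv j - ζ) * x) := by
        rw [Finset.mul_sum]
        refine Finset.sum_congr rfl fun k _ => ?_
        have hcard : (Finset.univ.erase k).card = n := by
          rw [Finset.card_erase_of_mem (Finset.mem_univ k), Finset.card_univ, Fintype.card_fin]
          omega
        rw [show ∏ j ∈ Finset.univ.erase k, (1 - (tv j - ζ) * x)
              = ∏ j ∈ Finset.univ.erase k, (x * (x⁻¹ + ζ - tv j)) from
            Finset.prod_congr rfl fun j _ => key _,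
          Finset.prod_mul_distrib, Finset.prod_const, hcard]
        ring

variable (ζ : ℝ)

noncomputable def Dser : PowerSeries ℝ :=
  ∏ i : Fin n, (1 - PowerSeries.C (sv i - ζ) * PowerSeries.X)

noncomputable def Pser : PowerSeries ℝ :=
  ∏ k : Fin (n+1), (1 - PowerSeries.C (tv k - ζ) * PowerSeries.X)

noncomputable def mser : PowerSeries ℝ :=
  PowerSeries.mk fun j => ∑ k, pc tv sv k * (tv k - ζ) ^ j

lemma geom_mul (c : ℝ) :
    (PowerSeries.mk fun j => c ^ j) * (1 - PowerSeries.C c * PowerSeries.X) = 1 := by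
  ext j
  rw [mul_sub, mul_one, show (PowerSeries.mk fun j => c ^ j) * (PowerSeries.C c * PowerSeries.X)
      = PowerSeries.C c * (PowerSeries.X * PowerSeries.mk fun j => c ^ j) from by ring]
  cases j with
  | zero => simp
  | succ m =>
    rw [map_sub, PowerSeries.coeff_mk]
    rw [PowerSeries.coeff_C_mul, PowerSeries.coeff_succ_X_mul, PowerSeries.coeff_mk]
    simp [pow_succ, mul_comm, PowerSeries.coeff_one]

lemma xident_ps (hinj : Set.InjOn tv ↑(Finset.univ : Finset (Fin (n+1)))) :
    Dser sv ζ = ∑ k : Fin (n+1), PowerSeries.C (pc tv sv k) *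
      ∏ j ∈ Finset.univ.erase k, (1 - PowerSeries.C (tv j - ζ) * PowerSeries.X) := by
  have h := congrArg (Polynomial.coeToPowerSeries.ringHom (R := ℝ)) (xident tv sv hinj ζ)
  simpa only [map_prod, map_sum, map_mul, coeToPowerSeries.ringHom_apply,
    Polynomial.coe_sub, Polynomial.coe_one, Polynomial.coe_mul,
    Polynomial.coe_C, Polynomial.coe_X, Dser] using h

lemma mser_mul_Pser (hinj : Set.InjOn tv ↑(Finset.univ : Finset (Fin (n+1)))) :
    mser tv sv ζ * Pser tv ζ = Dser sv ζ := by
  have hmk : mser tv sv ζ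
      = ∑ k, PowerSeries.C (pc tv sv k) * PowerSeries.mk fun j => (tv k - ζ) ^ j := by
    ext j
    simp only [mser, PowerSeries.coeff_mk, map_sum, PowerSeries.coeff_C_mul]
  rw [hmk, Finset.sum_mul, xident_ps tv sv ζ hinj]
  refine Finset.sum_congr rfl fun k _ => ?_
  rw [Pser, ← Finset.mul_prod_erase _ _ (Finset.mem_univ k), mul_assoc,
    show (PowerSeries.mk fun j => (tv k - ζ) ^ j) *
        ((1 - PowerSeries.C (tv k - ζ) * PowerSeries.X) *
          ∏ j ∈ Finset.univ.erase k, (1 - PowerSeries.C (tv j - ζ) * PowerSeries.X))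
      = ((PowerSeries.mk fun j => (tv k - ζ) ^ j) *
          (1 - PowerSeries.C (tv k - ζ) * PowerSeries.X)) *
          ∏ j ∈ Finset.univ.erase k, (1 - PowerSeries.C (tv j - ζ) * PowerSeries.X) from by
      ring,
    geom_mul, one_mul]

lemma constantCoeff_Dser : PowerSeries.constantCoeff (Dser sv ζ) = 1 := by
  rw [Dser, map_prod]
  simp

lemma constantCoeff_Pser : PowerSeries.constantCoeff (Pser tv ζ) = 1 := by
  rw [Pser, map_prod]
  simp

noncomputable def Fser : PowerSeries ℝ := Pser tv ζ * (Dser sv ζ)⁻¹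

lemma Fser_mul_Dser : Fser tv sv ζ * Dser sv ζ = Pser tv ζ := by
  rw [Fser, mul_assoc, PowerSeries.inv_mul_cancel _ (by rw [constantCoeff_Dser]; norm_num),
    mul_one]

lemma Fser_mul_mser (hinj : Set.InjOn tv ↑(Finset.univ : Finset (Fin (n+1)))) :
    Fser tv sv ζ * mser tv sv ζ = 1 := by
  have hP : Pser tv ζ ≠ 0 := by
    intro h
    have := constantCoeff_Pser tv ζ
    rw [h] at this
    simp at this
  apply mul_right_cancel₀ hP
  calc Fser tv sv ζ * mser tv sv ζ * Pser tv ζ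
      = Fser tv sv ζ * (mser tv sv ζ * Pser tv ζ) := by ring
    _ = Fser tv sv ζ * Dser sv ζ := by rw [mser_mul_Pser tv sv ζ hinj]
    _ = Pser tv ζ := Fser_mul_Dser tv sv ζ
    _ = 1 * Pser tv ζ := (one_mul _).symm

lemma mcoeff_bound {R : ℝ} (hR : 0 ≤ R) (hpc0 : ∀ k, 0 ≤ pc tv sv k)
    (hpsum : ∑ k, pc tv sv k = 1)
    (hb : ∀ k, pc tv sv k ≠ 0 → |tv k - ζ| ≤ R) (j : ℕ) :
    |∑ k, pc tv sv k * (tv k - ζ) ^ j| ≤ R ^ j := by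
  calc |∑ k, pc tv sv k * (tv k - ζ) ^ j|
      ≤ ∑ k, |pc tv sv k * (tv k - ζ) ^ j| := Finset.abs_sum_le_sum_abs _ _
    _ ≤ ∑ k, pc tv sv k * R ^ j := by
        refine Finset.sum_le_sum fun k _ => ?_
        rcases eq_or_ne (pc tv sv k) 0 with h | h
        · simp [h]
        · rw [abs_mul, abs_of_nonneg (hpc0 k), abs_pow]
          exact mul_le_mul_of_nonneg_left
            (pow_le_pow_left₀ (abs_nonneg _) (hb k h) j) (hpc0 k)
    _ = R ^ j := by rw [← Finset.sum_mul, hpsum, one_mul]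

lemma helper_sum {R : ℝ} (hR : 0 ≤ R) :
    ∀ j, 1 ≤ j →
      ∑ a ∈ Finset.range j, (if a = 0 then 1 else (2*R)^a/2) * R^(j-a) = (2*R)^j/2 := by
  intro j hj
  induction j, hj using Nat.le_induction with
  | base => simp
  | succ j hj ih =>
    rw [Finset.sum_range_succ]
    have h1 : ∀ a ∈ Finset.range j, (if a = 0 then 1 else (2*R)^a/2) * R^(j+1-a)
        = R * ((if a = 0 then 1 else (2*R)^a/2) * R^(j-a)) := by
      intro a ha
      have : j + 1 - a = (j - a) + 1 := by
        have := Finset.mem_range.mp ha; omega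
      rw [this, pow_succ]; ring
    rw [Finset.sum_congr rfl h1, ← Finset.mul_sum, ih,
      if_neg (by omega : ¬ j = 0), show j + 1 - j = 1 from by omega]
    rw [pow_succ]
    ring

lemma Fser_coeff_bound (hinj : Set.InjOn tv ↑(Finset.univ : Finset (Fin (n+1))))
    {R : ℝ} (hR : 0 < R) (hpc0 : ∀ k, 0 ≤ pc tv sv k)
    (hb : ∀ k, pc tv sv k ≠ 0 → |tv k - ζ| ≤ R) :
    ∀ j, 1 ≤ j → |PowerSeries.coeff j (Fser tv sv ζ)| ≤ (2*R)^j / 2 := by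
  have hpsum := psum tv sv hinj
  set Fc : ℕ → ℝ := fun j => PowerSeries.coeff j (Fser tv sv ζ) with hFc
  set mc : ℕ → ℝ := fun j => ∑ k, pc tv sv k * (tv k - ζ) ^ j with hmc
  have hmser : ∀ j, PowerSeries.coeff j (mser tv sv ζ) = mc j := by
    intro j; simp [mser, hmc]
  have hmc0 : mc 0 = 1 := by
    simp only [hmc, pow_zero, mul_one]; exact hpsum
  have hFc0 : Fc 0 = 1 := by
    have h := congrArg (PowerSeries.coeff 0) (Fser_mul_mser tv sv ζ hinj)
    rw [PowerSeries.coeff_zero_eq_constantCoeff, map_mul, map_one] at h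
    have h2 : (PowerSeries.constantCoeff) (mser tv sv ζ) = 1 := by
      rw [← PowerSeries.coeff_zero_eq_constantCoeff, hmser 0, hmc0]
    rw [h2, mul_one] at h
    have h3 : Fc 0 = (PowerSeries.constantCoeff) (Fser tv sv ζ) := by
      simp [hFc, PowerSeries.coeff_zero_eq_constantCoeff]
    rw [h3]
    exact h
  have hrec : ∀ j, 1 ≤ j → Fc j = -∑ a ∈ Finset.range j, Fc a * mc (j - a) := by
    intro j hj
    have h := congrArg (PowerSeries.coeff j) (Fser_mul_mser tv sv ζ hinj)
    rw [PowerSeries.coeff_mul, PowerSeries.coeff_one, if_neg (by omega : ¬ j = 0)] at h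
    rw [Finset.Nat.sum_antidiagonal_eq_sum_range_succ_mk] at h
    simp only [hmser] at h
    rw [Finset.sum_range_succ, Nat.sub_self, hmc0, mul_one] at h
    have : Fc j = PowerSeries.coeff j (Fser tv sv ζ) := rfl
    rw [this]
    linarith [h]
  have hmbound : ∀ j, |mc j| ≤ R ^ j :=
    fun j => mcoeff_bound tv sv ζ hR.le hpc0 hpsum hb j
  intro j
  induction j using Nat.strong_induction_on with
  | _ j ih =>
    intro hj
    calc |Fc j| = |∑ a ∈ Finset.range j, Fc a * mc (j - a)| := by rw [hrec j hj, abs_neg]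
      _ ≤ ∑ a ∈ Finset.range j, |Fc a * mc (j - a)| := Finset.abs_sum_le_sum_abs _ _
      _ ≤ ∑ a ∈ Finset.range j, (if a = 0 then 1 else (2*R)^a/2) * R^(j-a) := by
          refine Finset.sum_le_sum fun a ha => ?_
          rw [abs_mul]
          have hm := hmbound (j - a)
          have hFa : |Fc a| ≤ (if a = 0 then 1 else (2*R)^a/2) := by
            split
            · rename_i h0; rw [h0, hFc0]; simp
            · rename_i h0; exact ih a (Finset.mem_range.mp ha) (by omega)
          exact mul_le_mul hFa hm (abs_nonneg _) (by positivity)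
      _ = (2*R)^j/2 := helper_sum hR.le j hj

end Generic

/-! ### The specific data coming from a partition -/

section Specific

variable (n : ℕ) (lam : Fin n → ℕ)

/-- extended row lengths -/
noncomputable def lv (k : Fin (n+1)) : ℝ :=
  if h : (k : ℕ) < n then (lam ⟨k, h⟩ : ℝ) else 0

/-- pole locations -/
noncomputable def tv (k : Fin (n+1)) : ℝ := lv n lam k - (k : ℕ)

/-- zero locations -/
noncomputable def sv (i : Fin n) : ℝ := (lam i : ℝ) - (i : ℕ) - 1

lemma lv_nonneg (k : Fin (n+1)) : 0 ≤ lv n lam k := by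
  unfold lv; split <;> positivity

lemma tv_castSucc (i : Fin n) : tv n lam i.castSucc = (lam i : ℝ) - (i : ℕ) := by
  simp [tv, lv, i.isLt]

lemma tv_last : tv n lam (Fin.last n) = -(n : ℝ) := by
  simp [tv, lv]

lemma sv_eq (i : Fin n) : sv n lam i = tv n lam i.castSucc - 1 := by
  rw [sv, tv_castSucc]

variable {n lam}
variable (hanti : ∀ i j : Fin n, i ≤ j → lam j ≤ lam i)
include hanti

lemma lv_anti {j k : Fin (n+1)} (h : (j : ℕ) ≤ (k : ℕ)) : lv n lam k ≤ lv n lam j := by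
  unfold lv
  split
  · rename_i hk
    have hj : (j : ℕ) < n := lt_of_le_of_lt h hk
    rw [dif_pos hj]
    exact_mod_cast hanti ⟨j, hj⟩ ⟨k, hk⟩ h
  · exact lv_nonneg n lam j

lemma gap {j k : Fin (n+1)} (h : (j : ℕ) ≤ (k : ℕ)) :
    tv n lam k + ((k : ℕ) - (j : ℕ) : ℝ) ≤ tv n lam j := by
  have := lv_anti hanti h
  unfold tv
  linarith

lemma tv_lt {j k : Fin (n+1)} (h : (j : ℕ) < (k : ℕ)) : tv n lam k < tv n lam j := by
  have h1 := gap hanti (le_of_lt h)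
  have h2 : (1 : ℝ) ≤ ((k : ℕ) : ℝ) - ((j : ℕ) : ℝ) := by
    have : (j : ℕ) + 1 ≤ (k : ℕ) := h
    have := (Nat.cast_le (α := ℝ)).2 this
    push_cast at this
    linarith
  linarith

lemma tv_injOn : Set.InjOn (tv n lam) ↑(Finset.univ : Finset (Fin (n+1))) := by
  intro a _ b _ hab
  by_contra hne
  rcases Nat.lt_or_ge (a : ℕ) (b : ℕ) with h | h
  · exact absurd hab (ne_of_gt (tv_lt hanti h))
  · rcases Nat.lt_or_ge (b : ℕ) (a : ℕ) with h' | h'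
    · exact absurd hab (ne_of_lt (tv_lt hanti h'))
    · exact hne (Fin.ext (le_antisymm h' h))

omit hanti in
lemma erase_eq_image (k : Fin (n+1)) :
    (Finset.univ : Finset (Fin (n+1))).erase k = Finset.image k.succAbove Finset.univ := by
  ext j
  simp only [Finset.mem_erase, Finset.mem_univ, and_true, Finset.mem_image, true_and]
  constructor
  · intro hj
    exact Fin.exists_succAbove_eq hj
  · rintro ⟨i, rfl⟩
    exact Fin.succAbove_ne k i

omit hanti in
lemma prod_erase_eq {M : Type*} [CommMonoid M] (k : Fin (n+1)) (f : Fin (n+1) → M) :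
    ∏ j ∈ Finset.univ.erase k, f j = ∏ i : Fin n, f (k.succAbove i) := by
  rw [erase_eq_image, Finset.prod_image]
  intro a _ b _ h
  exact Fin.succAbove_right_injective h

lemma pc_nonneg (k : Fin (n+1)) : 0 ≤ pc (tv n lam) (sv n lam) k := by
  rw [pc, prod_erase_eq, ← Finset.prod_mul_distrib]
  apply Finset.prod_nonneg
  intro i _
  rcases lt_or_ge (i : ℕ) (k : ℕ) with h | h
  · have hsa : k.succAbove i = i.castSucc := Fin.succAbove_of_castSucc_lt k i (by
      rwa [Fin.lt_def, Fin.coe_castSucc])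
    have hg := gap hanti (j := i.castSucc) (k := k) (by simpa using le_of_lt h)
    have h2 : (1 : ℝ) ≤ ((k : ℕ) : ℝ) - ((i : ℕ) : ℝ) := by
      have : (i : ℕ) + 1 ≤ (k : ℕ) := h
      have := (Nat.cast_le (α := ℝ)).2 this
      push_cast at this
      linarith
    rw [hsa, sv_eq]
    set a := tv n lam k - tv n lam i.castSucc with ha
    have hneg : a ≤ -1 := by
      simp only [Fin.coe_castSucc] at hg
      simp only [ha]
      linarith
    have : (tv n lam k - (tv n lam i.castSucc - 1)) * a⁻¹ = (-(a + 1)) * (-a)⁻¹ := by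
      rw [inv_neg, ha]; ring
    rw [this]
    exact mul_nonneg (by linarith) (inv_nonneg.2 (by linarith))
  · have hsa : k.succAbove i = i.succ := Fin.succAbove_of_le_castSucc k i (by
      rwa [Fin.le_def, Fin.coe_castSucc])
    have hg1 := gap hanti (j := k) (k := i.castSucc) (by simpa using h)
    have hg2 := gap hanti (j := k) (k := i.succ) (by simp; omega)
    simp only [Fin.coe_castSucc, Fin.val_succ] at hg1 hg2
    have hc1 : (0:ℝ) ≤ ((i:ℕ):ℝ) - ((k:ℕ):ℝ) := by
      have := (Nat.cast_le (α := ℝ)).2 h; push_cast at this; linarith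
    rw [hsa, sv_eq]
    push_cast at hg2
    apply mul_nonneg
    · linarith
    · apply inv_nonneg.2; linarith

lemma tv_bound {A : ℝ} (hA : 0 < A)
    (hrows : ((Finset.univ.filter fun i : Fin n => lam i ≠ 0).card : ℝ) ≤ A)
    (hcols : ∀ i : Fin n, (lam i : ℝ) ≤ A)
    (k : Fin (n+1)) (hpc : pc (tv n lam) (sv n lam) k ≠ 0) : |tv n lam k| ≤ A := by
  have hnum : ∀ i : Fin n, tv n lam k - sv n lam i ≠ 0 := by
    intro i hzero
    apply hpc
    rw [pc, Finset.prod_eq_zero (Finset.mem_univ i) hzero, zero_mul]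
  rw [abs_le]
  constructor
  · by_cases h0 : (k : ℕ) = 0
    · have h1 := lv_nonneg n lam k
      rw [tv, h0]
      push_cast
      linarith
    · obtain ⟨m, hm⟩ : ∃ m, (k : ℕ) = m + 1 := ⟨(k : ℕ) - 1, by omega⟩
      have hmn : m < n := by have := k.isLt; omega
      have hlm : lam ⟨m, hmn⟩ ≠ 0 := by
        intro hz
        have hlvk : lv n lam k = 0 := by
          unfold lv
          split
          · rename_i hkn
            have hle : (⟨m, hmn⟩ : Fin n) ≤ ⟨(k : ℕ), hkn⟩ := by
              rw [Fin.le_def]; simp; omega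
            have := hanti ⟨m, hmn⟩ ⟨(k : ℕ), hkn⟩ hle
            rw [hz] at this
            simp [Nat.le_zero.mp this]
          · rfl
        apply hnum ⟨m, hmn⟩
        rw [tv, hlvk, sv]
        simp only [hz]
        push_cast
        rw [hm]
        push_cast
        ring
      have hall : ∀ i : Fin n, (i : ℕ) < (k : ℕ) → lam i ≠ 0 := by
        intro i hi hz
        apply hlm
        have hle : i ≤ (⟨m, hmn⟩ : Fin n) := by rw [Fin.le_def]; simp; omega
        have := hanti i ⟨m, hmn⟩ hle
        rw [hz] at this
        exact Nat.le_zero.mp this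
      have hkn' : (k : ℕ) ≤ n := by have := k.isLt; omega
      have hcard : (k : ℕ) ≤ (Finset.univ.filter fun i : Fin n => lam i ≠ 0).card := by
        have hinj2 := Finset.card_le_card_of_injOn
          (f := fun a : Fin (k : ℕ) => (⟨(a : ℕ), lt_of_lt_of_le a.isLt hkn'⟩ : Fin n))
          (s := Finset.univ)
          (t := Finset.univ.filter fun i : Fin n => lam i ≠ 0)
          (fun a _ => Finset.mem_filter.mpr ⟨Finset.mem_univ _, hall _ a.isLt⟩)
          (fun a _ b _ h => Fin.ext (by simpa using congrArg Fin.val h))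
        simpa using hinj2
      have h2 : ((k : ℕ) : ℝ) ≤ A := le_trans (Nat.cast_le.2 hcard) hrows
      have h3 := lv_nonneg n lam k
      rw [tv]
      linarith
  · have h1 : lv n lam k ≤ A := by
      unfold lv
      split
      · exact hcols _
      · linarith
    have h2 : (0:ℝ) ≤ ((k : ℕ) : ℝ) := Nat.cast_nonneg _
    rw [tv]
    linarith

end Specific

end ShiftedBooleanAux

/-- The shifted Boolean cumulant `B̃_k` (with respect to the shift `ζ`) of a partition
`λ` of `n` (given as `lam : Fin n → ℕ`): the coefficient of `z^{-(k-1)}` in the expansion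
`H(z+ζ) = z + ζ + B̃₂ z^{-1} + B̃₃ z^{-2} + ⋯` at infinity of the reciprocal Cauchy
transform `H(z) = (z+n) ⋅ ∏ᵢ (z-λᵢ+i-1) / ∏ᵢ (z-λᵢ+i)` (1-indexed products).
Formally, we work in the field of formal Laurent series in `X = z⁻¹`. -/
noncomputable def shiftedBoolean (n : ℕ) (lam : Fin n → ℕ) (ζ : ℝ) (k : ℕ) : ℝ :=
  let X : LaurentSeries ℝ := HahnSeries.single (1 : ℤ) (1 : ℝ)
  let w : LaurentSeries ℝ := X⁻¹ + (HahnSeries.C ζ : LaurentSeries ℝ)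
  HahnSeries.coeff
    ((w + (n : LaurentSeries ℝ)) *
        (∏ i : Fin n, (w - (lam i : LaurentSeries ℝ) + ((i : ℕ) : LaurentSeries ℝ))) /
      ∏ i : Fin n, (w - (lam i : LaurentSeries ℝ) + ((i : ℕ) : LaurentSeries ℝ) + 1))
    ((k : ℤ) - 1)

namespace ShiftedBooleanAux

set_option maxHeartbeats 1600000 in
lemma shiftedBoolean_eq (n : ℕ) (lam : Fin n → ℕ) (ζ : ℝ) (k : ℕ) :
    shiftedBoolean n lam ζ k
      = PowerSeries.coeff k (Fser (tv n lam) (sv n lam) ζ) := by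
  classical
  have hXinv : (HahnSeries.single (1:ℤ) (1:ℝ) : LaurentSeries ℝ)⁻¹
      = HahnSeries.single (-1 : ℤ) (1 : ℝ) := by
    symm
    apply eq_inv_of_mul_eq_one_right
    rw [HahnSeries.single_mul_single]
    norm_num
  have hfac : ∀ a : ℝ, (HahnSeries.single (-1 : ℤ) (1 : ℝ) : LaurentSeries ℝ) + HahnSeries.C (-a)
      = HahnSeries.single (-1 : ℤ) (1 : ℝ) *
        (HahnSeries.ofPowerSeries ℤ ℝ) (1 - PowerSeries.C a * PowerSeries.X) := by
    intro a
    rw [RingHom.map_sub, RingHom.map_one, RingHom.map_mul, HahnSeries.ofPowerSeries_C,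
      HahnSeries.ofPowerSeries_X]
    rw [mul_sub, mul_one, HahnSeries.C_apply, HahnSeries.C_apply,
      ← mul_assoc, HahnSeries.single_mul_single, HahnSeries.single_mul_single]
    norm_num
    have h2 : (HahnSeries.single (0:ℤ) (-a) : LaurentSeries ℝ)
        = -(HahnSeries.single (0:ℤ) a) := by
      ext j
      by_cases h : j = (0:ℤ) <;> simp [HahnSeries.coeff_single, h]
    rw [sub_eq_add_neg]
  have hcastlam : ∀ i : Fin n, ((lam i : ℕ) : LaurentSeries ℝ) = HahnSeries.C ((lam i : ℕ) : ℝ) :=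
    fun i => (map_natCast (HahnSeries.C : ℝ →+* HahnSeries ℤ ℝ) _).symm
  have hcasti : ∀ i : Fin n, (((i : ℕ) : ℕ) : LaurentSeries ℝ) = HahnSeries.C (((i : ℕ) : ℕ) : ℝ) :=
    fun i => (map_natCast (HahnSeries.C : ℝ →+* HahnSeries ℤ ℝ) _).symm
  have hcastn : ((n : ℕ) : LaurentSeries ℝ) = HahnSeries.C ((n : ℕ) : ℝ) :=
    (map_natCast (HahnSeries.C : ℝ →+* HahnSeries ℤ ℝ) _).symm
  have hnumfac : ∀ i : Fin n,
      (HahnSeries.single (-1:ℤ) (1:ℝ) : LaurentSeries ℝ) + (HahnSeries.C ζ : LaurentSeries ℝ)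
        - (lam i : LaurentSeries ℝ) + ((i : ℕ) : LaurentSeries ℝ)
      = HahnSeries.single (-1:ℤ) (1:ℝ) * (HahnSeries.ofPowerSeries ℤ ℝ)
          (1 - PowerSeries.C (tv n lam i.castSucc - ζ) * PowerSeries.X) := by
    intro i
    rw [← hfac]
    rw [hcastlam i, hcasti i]
    have : (-(tv n lam i.castSucc - ζ)) = ζ - ((lam i : ℕ) : ℝ) + (((i : ℕ) : ℕ) : ℝ) := by
      rw [tv_castSucc]; ring
    rw [this, map_add, map_sub]
    abel
  have hdenfac : ∀ i : Fin n,
      (HahnSeries.single (-1:ℤ) (1:ℝ) : LaurentSeries ℝ) + (HahnSeries.C ζ : LaurentSeries ℝ)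
        - (lam i : LaurentSeries ℝ) + ((i : ℕ) : LaurentSeries ℝ) + 1
      = HahnSeries.single (-1:ℤ) (1:ℝ) * (HahnSeries.ofPowerSeries ℤ ℝ)
          (1 - PowerSeries.C (sv n lam i - ζ) * PowerSeries.X) := by
    intro i
    rw [← hfac]
    rw [hcastlam i, hcasti i]
    have h1 : (-(sv n lam i - ζ)) = ζ - ((lam i : ℕ) : ℝ) + (((i : ℕ) : ℕ) : ℝ) + 1 := by
      rw [sv]; ring
    rw [h1, map_add, map_add, map_sub, HahnSeries.C_one]
    abel
  have hlastfac :
      (HahnSeries.single (-1:ℤ) (1:ℝ) : LaurentSeries ℝ) + (HahnSeries.C ζ : LaurentSeries ℝ)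
        + (n : LaurentSeries ℝ)
      = HahnSeries.single (-1:ℤ) (1:ℝ) * (HahnSeries.ofPowerSeries ℤ ℝ)
          (1 - PowerSeries.C (tv n lam (Fin.last n) - ζ) * PowerSeries.X) := by
    rw [← hfac]
    rw [hcastn]
    have : (-(tv n lam (Fin.last n) - ζ)) = ζ + ((n : ℕ) : ℝ) := by
      rw [tv_last]; ring
    rw [this, map_add]
    abel
  have hnum :
      ((HahnSeries.single (-1:ℤ) (1:ℝ) : LaurentSeries ℝ) + (HahnSeries.C ζ : LaurentSeries ℝ)
          + (n : LaurentSeries ℝ)) *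
        ∏ i : Fin n, ((HahnSeries.single (-1:ℤ) (1:ℝ) : LaurentSeries ℝ)
          + (HahnSeries.C ζ : LaurentSeries ℝ)
          - (lam i : LaurentSeries ℝ) + ((i : ℕ) : LaurentSeries ℝ))
      = (HahnSeries.single (-1:ℤ) (1:ℝ)) ^ (n+1)
          * (HahnSeries.ofPowerSeries ℤ ℝ) (Pser (tv n lam) ζ) := by
    rw [hlastfac, Finset.prod_congr rfl fun i _ => hnumfac i]
    rw [mul_comm]
    rw [show (∏ i : Fin n, (HahnSeries.single (-1:ℤ) (1:ℝ) * (HahnSeries.ofPowerSeries ℤ ℝ)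
          (1 - PowerSeries.C (tv n lam i.castSucc - ζ) * PowerSeries.X))) *
        (HahnSeries.single (-1:ℤ) (1:ℝ) * (HahnSeries.ofPowerSeries ℤ ℝ)
          (1 - PowerSeries.C (tv n lam (Fin.last n) - ζ) * PowerSeries.X))
      = ∏ kk : Fin (n+1), (HahnSeries.single (-1:ℤ) (1:ℝ) * (HahnSeries.ofPowerSeries ℤ ℝ)
          (1 - PowerSeries.C (tv n lam kk - ζ) * PowerSeries.X)) from
      (Fin.prod_univ_castSucc (f := fun kk : Fin (n+1) =>
        HahnSeries.single (-1:ℤ) (1:ℝ) * (HahnSeries.ofPowerSeries ℤ ℝ)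
          (1 - PowerSeries.C (tv n lam kk - ζ) * PowerSeries.X))).symm]
    rw [Finset.prod_mul_distrib, Finset.prod_const, Finset.card_univ, Fintype.card_fin,
      ← map_prod, Pser]
  have hden :
      (∏ i : Fin n, ((HahnSeries.single (-1:ℤ) (1:ℝ) : LaurentSeries ℝ)
          + (HahnSeries.C ζ : LaurentSeries ℝ)
          - (lam i : LaurentSeries ℝ) + ((i : ℕ) : LaurentSeries ℝ) + 1))
      = (HahnSeries.single (-1:ℤ) (1:ℝ)) ^ n
          * (HahnSeries.ofPowerSeries ℤ ℝ) (Dser (sv n lam) ζ) := by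
    rw [Finset.prod_congr rfl fun i _ => hdenfac i]
    rw [Finset.prod_mul_distrib, Finset.prod_const, Finset.card_univ, Fintype.card_fin,
      ← map_prod, Dser]
  have hS1ne : (HahnSeries.single (-1:ℤ) (1:ℝ) : LaurentSeries ℝ) ≠ 0 :=
    HahnSeries.single_ne_zero one_ne_zero
  have hDne : Dser (sv n lam) ζ ≠ 0 := by
    intro h
    have := constantCoeff_Dser (sv n lam) ζ
    rw [h, map_zero] at this
    norm_num at this
  have hoDne : (HahnSeries.ofPowerSeries ℤ ℝ) (Dser (sv n lam) ζ) ≠ 0 := by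
    intro h
    exact hDne (HahnSeries.ofPowerSeries_injective (by rw [h, map_zero]))
  have hdenne : (HahnSeries.single (-1:ℤ) (1:ℝ)) ^ n
      * (HahnSeries.ofPowerSeries ℤ ℝ) (Dser (sv n lam) ζ) ≠ 0 :=
    mul_ne_zero (pow_ne_zero _ hS1ne) hoDne
  have hdiv : ((HahnSeries.single (-1:ℤ) (1:ℝ)) ^ (n+1)
        * (HahnSeries.ofPowerSeries ℤ ℝ) (Pser (tv n lam) ζ)) /
      ((HahnSeries.single (-1:ℤ) (1:ℝ)) ^ n
        * (HahnSeries.ofPowerSeries ℤ ℝ) (Dser (sv n lam) ζ))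
      = HahnSeries.single (-1:ℤ) (1:ℝ)
          * (HahnSeries.ofPowerSeries ℤ ℝ) (Fser (tv n lam) (sv n lam) ζ) := by
    rw [div_eq_iff hdenne]
    calc (HahnSeries.single (-1:ℤ) (1:ℝ)) ^ (n+1)
          * (HahnSeries.ofPowerSeries ℤ ℝ) (Pser (tv n lam) ζ)
        = (HahnSeries.single (-1:ℤ) (1:ℝ)) ^ (n+1)
          * (HahnSeries.ofPowerSeries ℤ ℝ)
              (Fser (tv n lam) (sv n lam) ζ * Dser (sv n lam) ζ) := by
          rw [Fser_mul_Dser]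
      _ = HahnSeries.single (-1:ℤ) (1:ℝ)
            * (HahnSeries.ofPowerSeries ℤ ℝ) (Fser (tv n lam) (sv n lam) ζ)
            * ((HahnSeries.single (-1:ℤ) (1:ℝ)) ^ n
              * (HahnSeries.ofPowerSeries ℤ ℝ) (Dser (sv n lam) ζ)) := by
          rw [RingHom.map_mul, pow_succ]
          ring
  have hgoal : shiftedBoolean n lam ζ k = HahnSeries.coeff
      ((((HahnSeries.single (1:ℤ) (1:ℝ) : LaurentSeries ℝ))⁻¹
          + (HahnSeries.C ζ : LaurentSeries ℝ) + (n : LaurentSeries ℝ)) *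
        (∏ i : Fin n, ((HahnSeries.single (1:ℤ) (1:ℝ) : LaurentSeries ℝ)⁻¹
          + (HahnSeries.C ζ : LaurentSeries ℝ)
          - (lam i : LaurentSeries ℝ) + ((i : ℕ) : LaurentSeries ℝ))) /
        ∏ i : Fin n, ((HahnSeries.single (1:ℤ) (1:ℝ) : LaurentSeries ℝ)⁻¹
          + (HahnSeries.C ζ : LaurentSeries ℝ)
          - (lam i : LaurentSeries ℝ) + ((i : ℕ) : LaurentSeries ℝ) + 1))
      ((k : ℤ) - 1) := rfl
  rw [hgoal, hXinv, hnum, hden, hdiv, sub_eq_add_neg,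
    HahnSeries.coeff_single_mul_add, one_mul, HahnSeries.ofPowerSeries_apply_coeff]

end ShiftedBooleanAux

/-- bound on shifted Boolean cumulants of a Young diagram with at most `A`
rows and columns. -/
theorem shiftedBoolean_bound (ζ : ℝ) (hζ : 0 ≤ ζ) (A : ℝ) (hA : 0 < A)
    (n : ℕ) (lam : Fin n → ℕ)
    (hanti : ∀ i j : Fin n, i ≤ j → lam j ≤ lam i)
    (hsum : ∑ i, lam i = n)
    (hrows : ((Finset.univ.filter fun i : Fin n => lam i ≠ 0).card : ℝ) ≤ A)
    (hcols : ∀ i : Fin n, (lam i : ℝ) ≤ A)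
    (k : ℕ) (hk : 2 ≤ k) :
    |shiftedBoolean n lam ζ k| ≤ (2 * (A + ζ)) ^ k / 2 := by
  classical
  have hR : (0:ℝ) < A + ζ := by linarith
  have hinj := ShiftedBooleanAux.tv_injOn hanti
  have hpc0 := fun kk => ShiftedBooleanAux.pc_nonneg hanti kk
  have hb : ∀ kk, ShiftedBooleanAux.pc (ShiftedBooleanAux.tv n lam)
      (ShiftedBooleanAux.sv n lam) kk ≠ 0 →
      |ShiftedBooleanAux.tv n lam kk - ζ| ≤ A + ζ := by
    intro kk h
    have htv := ShiftedBooleanAux.tv_bound hanti hA hrows hcols kk h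
    have h1 := abs_le.mp htv
    rw [abs_le]
    constructor <;> [linarith [h1.1]; linarith [h1.2]]
  have key := ShiftedBooleanAux.Fser_coeff_bound (ShiftedBooleanAux.tv n lam)
    (ShiftedBooleanAux.sv n lam) ζ hinj hR hpc0 hb k (by omega)
  rw [ShiftedBooleanAux.shiftedBoolean_eq]
  exact key
end

section
/- Let π, σ₁, σ₂ be permutations of {1,…,n} with π = σ₁σ₂. Then there exist permutations σ₁′, σ₂′ of {1,…,n} such that π = σ₁′σ₂′, |σ₁′| + |σ₂′| = |σ₁| + |σ₂|, |σ₂′| = |σ₂′σ₂^{−1}| + |σ₂|, every orbit of σ₁′ is contained in some orbit of σ₂′, and κ(σ₂′) ≤ κ(π). -/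
/-- `|σ|`: the minimal number of transpositions whose product is `σ`; equivalently
`n` minus the number of orbits of `σ`. -/
def permLength {n : ℕ} (σ : Equiv.Perm (Fin n)) : ℕ :=
  σ.cycleType.sum - σ.cycleType.card

/-- `κ(σ)`: the number of orbits of `σ` (cycles, counting fixed points). -/
def numCycles {n : ℕ} (σ : Equiv.Perm (Fin n)) : ℕ :=
  σ.cycleType.card + (n - σ.cycleType.sum)

open Equiv Equiv.Perm Finset

variable {α : Type*} [Fintype α] [DecidableEq α]

/-- The orbit of `x` under `σ` as a finset. -/
def orbitF (σ : Perm α) (x : α) : Finset α := Finset.univ.filter (σ.SameCycle x)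

/-- Number of orbits. -/
def kappa (σ : Perm α) : ℕ := (Finset.univ.image (orbitF σ)).card

lemma mem_orbitF {σ : Perm α} {x y : α} : y ∈ orbitF σ x ↔ σ.SameCycle x y := by
  simp [orbitF]

lemma self_mem_orbitF (σ : Perm α) (x : α) : x ∈ orbitF σ x :=
  mem_orbitF.2 (SameCycle.refl _ _)

lemma orbitF_eq_of_sameCycle {σ : Perm α} {x y : α} (h : σ.SameCycle x y) :
    orbitF σ x = orbitF σ y := by
  ext z; simp only [mem_orbitF]
  exact ⟨fun hz => h.symm.trans hz, fun hz => h.trans hz⟩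

lemma sameCycle_of_orbitF_eq {σ : Perm α} {x y : α} (h : orbitF σ x = orbitF σ y) :
    σ.SameCycle x y := by
  have := self_mem_orbitF σ y
  rw [← h, mem_orbitF] at this
  exact this

/-- Orbit counting: `kappa σ = #cycles + #fixed points`. -/
lemma kappa_eq (σ : Perm α) :
    kappa σ = σ.cycleFactorsFinset.card + (Fintype.card α - σ.support.card) := by
  classical
  have hsplit : (Finset.univ : Finset α) = σ.support ∪ σ.supportᶜ := by
    simp
  have himg : Finset.univ.image (orbitF σ)
      = σ.support.image (orbitF σ) ∪ σ.supportᶜ.image (orbitF σ) := by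
    rw [hsplit, Finset.image_union]
  -- fixed point orbits are singletons
  have hfix : ∀ x ∈ σ.supportᶜ, orbitF σ x = {x} := by
    intro x hx
    rw [Finset.mem_compl, Equiv.Perm.notMem_support] at hx
    ext y
    simp only [mem_orbitF, Finset.mem_singleton]
    constructor
    · rintro ⟨i, rfl⟩
      exact zpow_apply_eq_self_of_apply_eq_self hx i
    · rintro rfl; exact SameCycle.refl _ _
  have hfixcard : (σ.supportᶜ.image (orbitF σ)).card = Fintype.card α - σ.support.card := by
    rw [Finset.image_congr (g := fun x => ({x} : Finset α)) (fun x hx => hfix x (by simpa using hx))]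
    rw [Finset.card_image_of_injective _ (fun a b h => Finset.singleton_inj.mp h)]
    simp [Finset.card_compl]
  -- support orbits are supports of cycle factors
  have hsup : ∀ x ∈ σ.support, orbitF σ x = (σ.cycleOf x).support := by
    intro x hx
    ext y
    rw [mem_orbitF, Equiv.Perm.mem_support_cycleOf_iff]
    exact ⟨fun h => ⟨h, hx⟩, fun h => h.1⟩
  have hsupimg : σ.support.image (orbitF σ)
      = σ.cycleFactorsFinset.image Equiv.Perm.support := by
    ext s
    simp only [Finset.mem_image]
    constructor
    · rintro ⟨x, hx, rfl⟩
      exact ⟨σ.cycleOf x, (Equiv.Perm.cycleOf_mem_cycleFactorsFinset_iff).2 hx, (hsup x hx).symm⟩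
    · rintro ⟨c, hc, rfl⟩
      obtain ⟨x, hx⟩ := (Equiv.Perm.mem_cycleFactorsFinset_iff.1 hc).1.nonempty_support
      have hcx : c = σ.cycleOf x := Equiv.Perm.cycle_is_cycleOf hx hc
      have hxs : x ∈ σ.support := by
        rw [← Equiv.Perm.cycleOf_mem_cycleFactorsFinset_iff, ← hcx]; exact hc
      exact ⟨x, hxs, by rw [hsup x hxs, hcx]⟩
  have hsupcard : (σ.support.image (orbitF σ)).card = σ.cycleFactorsFinset.card := by
    rw [hsupimg]
    apply Finset.card_image_of_injOn
    intro c hc d hd h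
    obtain ⟨x, hx⟩ := (Equiv.Perm.mem_cycleFactorsFinset_iff.1 hc).1.nonempty_support
    have hxd : x ∈ d.support := by rw [← h]; exact hx
    rw [Equiv.Perm.cycle_is_cycleOf hx hc, Equiv.Perm.cycle_is_cycleOf hxd hd]
  -- disjointness
  have hdisj : Disjoint (σ.support.image (orbitF σ)) (σ.supportᶜ.image (orbitF σ)) := by
    rw [Finset.disjoint_left]
    rintro s hs hs'
    obtain ⟨x, hx, rfl⟩ := Finset.mem_image.1 hs
    obtain ⟨y, hy, hxy⟩ := Finset.mem_image.1 hs'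
    rw [hfix y hy] at hxy
    have h1 : x ∈ ({y} : Finset α) := by rw [hxy]; exact self_mem_orbitF σ x
    have h2 : σ x ∈ ({y} : Finset α) := by
      rw [hxy]; exact mem_orbitF.2 ⟨1, by simp⟩
    rw [Finset.mem_singleton] at h1 h2
    exact (Equiv.Perm.mem_support.1 hx) (h2.trans h1.symm)
  rw [kappa, himg, Finset.card_union_of_disjoint hdisj, hfixcard, hsupcard]

lemma card_cycleType' (σ : Perm α) : Multiset.card σ.cycleType = σ.cycleFactorsFinset.card := by
  rw [Equiv.Perm.cycleType_def, Multiset.card_map]; rfl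

lemma two_mul_card_le_sum (σ : Perm α) :
    2 * Multiset.card σ.cycleType ≤ σ.cycleType.sum := by
  rw [mul_comm]
  simpa using Multiset.card_nsmul_le_sum (fun x hx => Equiv.Perm.two_le_of_mem_cycleType hx)

/-- key arithmetic relation -/
lemma permLength_add_kappa {n : ℕ} (σ : Perm (Fin n)) :
    permLength σ + kappa σ = n := by
  have h1 : σ.cycleType.sum = σ.support.card := Equiv.Perm.sum_cycleType σ
  have h2 : σ.support.card ≤ n := by
    simpa using Finset.card_le_card (Finset.subset_univ σ.support)
  have h3 := two_mul_card_le_sum σ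
  rw [permLength, kappa_eq, ← card_cycleType', h1, Fintype.card_fin]
  omega

lemma numCycles_eq_kappa {n : ℕ} (σ : Perm (Fin n)) : numCycles σ = kappa σ := by
  have h1 : σ.cycleType.sum = σ.support.card := Equiv.Perm.sum_cycleType σ
  rw [numCycles, kappa_eq, ← card_cycleType', h1, Fintype.card_fin]

lemma permLength_one {n : ℕ} : permLength (1 : Perm (Fin n)) = 0 := by
  simp [permLength, Equiv.Perm.cycleType_one]

lemma permLength_inv {n : ℕ} (σ : Perm (Fin n)) : permLength σ⁻¹ = permLength σ := by
  simp [permLength, Equiv.Perm.cycleType_inv]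

lemma kappa_inv (σ : Perm α) : kappa σ⁻¹ = kappa σ := by
  have : orbitF σ⁻¹ = orbitF σ := by
    funext x; ext y; simp [mem_orbitF, Equiv.Perm.sameCycle_inv]
  rw [kappa, kappa, this]

lemma permLength_eq_zero_iff {n : ℕ} {σ : Perm (Fin n)} : permLength σ = 0 ↔ σ = 1 := by
  constructor
  · intro h
    have h3 := two_mul_card_le_sum σ
    rw [permLength] at h
    have : Multiset.card σ.cycleType = 0 := by omega
    exact Equiv.Perm.card_cycleType_eq_zero.1 this
  · rintro rfl; exact permLength_one

lemma permLength_swap {n : ℕ} {a b : Fin n} (h : a ≠ b) :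
    permLength (Equiv.swap a b) = 1 := by
  rw [permLength, (Equiv.Perm.isCycle_swap h).cycleType, Equiv.Perm.card_support_swap h]
  rfl

/-- Invariance lemma: orbits of `swap a b * σ` vs orbits of `σ`. -/
lemma sameCycle_swap_mul_cases {σ : Perm α} {a b x y : α}
    (h : (Equiv.swap a b * σ).SameCycle x y) :
    σ.SameCycle x y ∨
      ((σ.SameCycle x a ∨ σ.SameCycle x b) ∧ (σ.SameCycle y a ∨ σ.SameCycle y b)) := by
  obtain ⟨i, hi⟩ := h
  subst hi
  set σ' := Equiv.swap a b * σ with hσ'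
  have key : ∀ i : ℤ, σ.SameCycle x ((σ' ^ i) x) ∨
      ((σ.SameCycle x a ∨ σ.SameCycle x b) ∧
       (σ.SameCycle ((σ' ^ i) x) a ∨ σ.SameCycle ((σ' ^ i) x) b)) := by
    intro i
    induction i using Int.induction_on with
    | zero => left; simpa using SameCycle.refl σ x
    | succ k ih =>
      have hstep : (σ' ^ ((k : ℤ) + 1)) x = σ' ((σ' ^ (k : ℤ)) x) := by
        rw [add_comm, zpow_one_add, Equiv.Perm.mul_apply]
      set z := (σ' ^ (k : ℤ)) x with hz
      rw [hstep]
      have hz' : σ' z = Equiv.swap a b (σ z) := rfl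
      by_cases h1 : σ z = a
      · have hza : σ.SameCycle z a := h1 ▸ ⟨1, by simp⟩
        have : σ' z = b := by rw [hz', h1, Equiv.swap_apply_left]
        rw [this]
        rcases ih with ih | ih
        · exact Or.inr ⟨Or.inl (ih.trans hza), Or.inr (SameCycle.refl _ _)⟩
        · exact Or.inr ⟨ih.1, Or.inr (SameCycle.refl _ _)⟩
      · by_cases h2 : σ z = b
        · have hzb : σ.SameCycle z b := h2 ▸ ⟨1, by simp⟩
          have : σ' z = a := by rw [hz', h2, Equiv.swap_apply_right]
          rw [this]
          rcases ih with ih | ih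
          · exact Or.inr ⟨Or.inr (ih.trans hzb), Or.inl (SameCycle.refl _ _)⟩
          · exact Or.inr ⟨ih.1, Or.inl (SameCycle.refl _ _)⟩
        · have : σ' z = σ z := by rw [hz', Equiv.swap_apply_of_ne_of_ne h1 h2]
          rw [this]
          have hzz : σ.SameCycle z (σ z) := ⟨1, by simp⟩
          rcases ih with ih | ih
          · exact Or.inl (ih.trans hzz)
          · exact Or.inr ⟨ih.1, Or.imp (fun h => hzz.symm.trans h) (fun h => hzz.symm.trans h) ih.2⟩
    | pred k ih =>
      have hstep : (σ' ^ (-(k : ℤ) - 1)) x = σ'⁻¹ ((σ' ^ (-(k : ℤ))) x) := by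
        rw [sub_eq_add_neg, add_comm, zpow_add, zpow_neg_one, Equiv.Perm.mul_apply]
      set z := (σ' ^ (-(k : ℤ))) x with hz
      rw [hstep]
      have hz' : σ'⁻¹ z = σ⁻¹ (Equiv.swap a b z) := by
        rw [hσ', mul_inv_rev, Equiv.Perm.mul_apply, Equiv.swap_inv]
      by_cases h1 : z = a
      · have : σ'⁻¹ z = σ⁻¹ b := by rw [hz', h1, Equiv.swap_apply_left]
        rw [this]
        have hb : σ.SameCycle (σ⁻¹ b) b := ⟨1, by simp⟩
        rcases ih with ih | ih
        · exact Or.inr ⟨Or.inl (ih.trans (h1 ▸ SameCycle.refl _ _)), Or.inr hb⟩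
        · exact Or.inr ⟨ih.1, Or.inr hb⟩
      · by_cases h2 : z = b
        · have : σ'⁻¹ z = σ⁻¹ a := by rw [hz', h2, Equiv.swap_apply_right]
          rw [this]
          have ha : σ.SameCycle (σ⁻¹ a) a := ⟨1, by simp⟩
          rcases ih with ih | ih
          · exact Or.inr ⟨Or.inr (ih.trans (h2 ▸ SameCycle.refl _ _)), Or.inl ha⟩
          · exact Or.inr ⟨ih.1, Or.inl ha⟩
        · have : σ'⁻¹ z = σ⁻¹ z := by rw [hz', Equiv.swap_apply_of_ne_of_ne h1 h2]
          rw [this]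
          have hzz : σ.SameCycle z (σ⁻¹ z) := ⟨-1, by simp⟩
          rcases ih with ih | ih
          · exact Or.inl (ih.trans hzz)
          · exact Or.inr ⟨ih.1, Or.imp (fun h => hzz.symm.trans h) (fun h => hzz.symm.trans h) ih.2⟩
  exact key i

set_option linter.unusedSectionVars false

lemma pow_succ_apply (τ : Perm α) (k : ℕ) (x : α) : (τ ^ (k + 1)) x = τ ((τ ^ k) x) := by
  rw [pow_succ', Equiv.Perm.mul_apply]

lemma pow_cancel (σ : Perm α) {a : α} {k j : ℕ} (hkj : k ≤ j) (h : (σ ^ j) a = (σ ^ k) a) :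
    (σ ^ (j - k)) a = a := by
  have h2 : (σ ^ k) ((σ ^ (j - k)) a) = (σ ^ k) a := by
    rw [← Equiv.Perm.mul_apply, ← pow_add, Nat.add_sub_cancel' hkj, h]
  exact (σ ^ k).injective h2

lemma exists_nat_pow_eq (σ : Perm α) (a : α) (m : ℕ) (hm : 0 < m) (ha : (σ ^ m) a = a) :
    ∀ i : ℤ, ∃ k : ℕ, k < m ∧ (σ ^ i) a = (σ ^ k) a := by
  intro i
  induction i using Int.induction_on with
  | zero => exact ⟨0, hm, by simp⟩
  | succ j ih =>
    obtain ⟨k, hk, hik⟩ := ih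
    have hstep : (σ ^ ((j : ℤ) + 1)) a = σ ((σ ^ (j : ℤ)) a) := by
      rw [add_comm, zpow_one_add, Equiv.Perm.mul_apply]
    rw [hstep, hik, ← pow_succ_apply]
    by_cases hk1 : k + 1 < m
    · exact ⟨k + 1, hk1, rfl⟩
    · have hkm : k + 1 = m := by omega
      exact ⟨0, hm, by rw [hkm, ha]; simp⟩
  | pred j ih =>
    obtain ⟨k, hk, hik⟩ := ih
    have hstep : (σ ^ (-(j : ℤ) - 1)) a = σ⁻¹ ((σ ^ (-(j : ℤ))) a) := by
      rw [sub_eq_add_neg, add_comm, zpow_add, zpow_neg_one, Equiv.Perm.mul_apply]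
    rw [hstep, hik]
    rcases Nat.eq_zero_or_pos k with rfl | hk0
    · refine ⟨m - 1, by omega, ?_⟩
      apply σ.injective
      rw [← pow_succ_apply]
      have : m - 1 + 1 = m := by omega
      rw [this, ha]
      simp
    · refine ⟨k - 1, by omega, ?_⟩
      apply σ.injective
      rw [← pow_succ_apply]
      have : k - 1 + 1 = k := by omega
      rw [this]
      simp

/-- minimal positive return time to `a` -/
lemma exists_min_period (σ : Perm α) (a : α) :
    ∃ m : ℕ, 0 < m ∧ (σ ^ m) a = a ∧ ∀ k, 0 < k → k < m → (σ ^ k) a ≠ a := by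
  have hex : ∃ m, 0 < m ∧ (σ ^ m) a = a := by
    refine ⟨orderOf σ, orderOf_pos σ, by rw [pow_orderOf_eq_one]; simp⟩
  classical
  obtain ⟨hm0, hma⟩ := Nat.find_spec hex
  exact ⟨Nat.find hex, hm0, hma, fun k hk0 hkm hka => Nat.find_min hex hkm ⟨hk0, hka⟩⟩

/-- merge: if `a` and `b` are in different orbits of `σ`, they are in the same orbit
of `swap a b * σ`. -/
lemma sameCycle_swap_mul_of_not_sameCycle {σ : Perm α} {a b : α}
    (hab : ¬ σ.SameCycle a b) : (Equiv.swap a b * σ).SameCycle a b := by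
  have hne : a ≠ b := fun h => hab (h ▸ SameCycle.refl _ _)
  obtain ⟨m, hm0, hma, hmin⟩ := exists_min_period σ a
  set σ' := Equiv.swap a b * σ with hσ'
  have hσ'app : ∀ z, σ' z = Equiv.swap a b (σ z) := fun z => rfl
  have key : ∀ k, k < m → (σ' ^ k) a = (σ ^ k) a := by
    intro k
    induction k with
    | zero => simp
    | succ j ih =>
      intro hj
      rw [pow_succ_apply, ih (by omega), hσ'app, ← pow_succ_apply]
      have h1 : (σ ^ (j + 1)) a ≠ a := hmin (j + 1) (by omega) (by omega)
      have h2 : (σ ^ (j + 1)) a ≠ b := fun h => hab ⟨((j + 1 : ℕ) : ℤ), by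
        rw [zpow_natCast]; exact h⟩
      exact Equiv.swap_apply_of_ne_of_ne h1 h2
  have hfin : (σ' ^ m) a = b := by
    have hm1 : m = (m - 1) + 1 := by omega
    rw [hm1, pow_succ_apply, key (m - 1) (by omega), hσ'app, ← pow_succ_apply, ← hm1, hma,
      Equiv.swap_apply_left]
  exact ⟨(m : ℤ), by rw [zpow_natCast]; exact hfin⟩

/-- split: if `a` and `b` are in the same orbit of `σ` (and distinct), they are in
different orbits of `swap a b * σ`. -/
lemma not_sameCycle_swap_mul_of_sameCycle {σ : Perm α} {a b : α} (hne : a ≠ b)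
    (hab : σ.SameCycle a b) : ¬ (Equiv.swap a b * σ).SameCycle a b := by
  obtain ⟨m, hm0, hma, hmin⟩ := exists_min_period σ a
  obtain ⟨i, hi⟩ := hab
  obtain ⟨j, hjm, hj⟩ := exists_nat_pow_eq σ a m hm0 hma i
  rw [hi] at hj
  have hj0 : 0 < j := by
    rcases Nat.eq_zero_or_pos j with rfl | h
    · exact absurd (by simpa using hj.symm) hne
    · exact h
  set σ' := Equiv.swap a b * σ with hσ'
  have hσ'app : ∀ z, σ' z = Equiv.swap a b (σ z) := fun z => rfl
  have key : ∀ k, k < j → (σ' ^ k) a = (σ ^ k) a := by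
    intro k
    induction k with
    | zero => simp
    | succ l ih =>
      intro hl
      rw [pow_succ_apply, ih (by omega), hσ'app, ← pow_succ_apply]
      have h1 : (σ ^ (l + 1)) a ≠ a := hmin (l + 1) (by omega) (by omega)
      have h2 : (σ ^ (l + 1)) a ≠ b := by
        intro h
        rw [hj] at h
        have := pow_cancel σ (le_of_lt hl) (h.symm)
        exact hmin (j - (l + 1)) (by omega) (by omega) this
      exact Equiv.swap_apply_of_ne_of_ne h1 h2
  have hreturn : (σ' ^ j) a = a := by
    have hj1 : j = (j - 1) + 1 := by omega
    rw [hj1, pow_succ_apply, key (j - 1) (by omega), hσ'app, ← pow_succ_apply, ← hj1, ← hj,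
      Equiv.swap_apply_right]
  intro hcon
  obtain ⟨i', hi'⟩ := hcon
  obtain ⟨k, hkj, hk⟩ := exists_nat_pow_eq σ' a j hj0 hreturn i'
  rw [hi'] at hk
  rw [key k hkj, hj] at hk
  have := pow_cancel σ (le_of_lt hkj) hk
  exact hmin (j - k) (by omega) (by omega) this

/-- merge decreases the number of orbits by exactly one. -/
lemma kappa_swap_mul_of_not_sameCycle {σ : Perm α} {a b : α} (hab : ¬ σ.SameCycle a b) :
    kappa σ = kappa (Equiv.swap a b * σ) + 1 := by
  classical
  set σ' := Equiv.swap a b * σ with hσ'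
  have hss : Equiv.swap a b * σ' = σ := by
    rw [hσ', ← mul_assoc, Equiv.swap_mul_self, one_mul]
  have E : ∀ {x y : α}, σ'.SameCycle x y →
      σ.SameCycle x y ∨ ((σ.SameCycle x a ∨ σ.SameCycle x b) ∧
        (σ.SameCycle y a ∨ σ.SameCycle y b)) := fun h => sameCycle_swap_mul_cases h
  have E' : ∀ {x y : α}, σ.SameCycle x y →
      σ'.SameCycle x y ∨ ((σ'.SameCycle x a ∨ σ'.SameCycle x b) ∧
        (σ'.SameCycle y a ∨ σ'.SameCycle y b)) := by
    intro x y h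
    rw [← hss] at h
    exact sameCycle_swap_mul_cases h
  have F : σ'.SameCycle a b := sameCycle_swap_mul_of_not_sameCycle hab
  have hor : ∀ {x : α}, (σ'.SameCycle x a ∨ σ'.SameCycle x b) → σ'.SameCycle x a := by
    rintro x (h | h)
    · exact h
    · exact h.trans F.symm
  have hA' : ∀ {x : α}, (σ.SameCycle x a ∨ σ.SameCycle x b) → σ'.SameCycle x a := by
    rintro x (h | h)
    · rcases E' h with h' | ⟨h1, _⟩
      · exact h'
      · exact hor h1
    · rcases E' h with h' | ⟨h1, _⟩
      · exact hor (Or.inr h')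
      · exact hor h1
  have hA : ∀ {x : α}, σ'.SameCycle x a → (σ.SameCycle x a ∨ σ.SameCycle x b) := by
    intro x h
    rcases E h with h' | ⟨h1, _⟩
    · exact Or.inl h'
    · exact h1
  -- orbit descriptions
  have claim1 : ∀ {x : α}, σ'.SameCycle x a →
      orbitF σ' x = orbitF σ a ∪ orbitF σ b := by
    intro x hx
    rw [orbitF_eq_of_sameCycle hx]
    ext y
    simp only [mem_orbitF, Finset.mem_union]
    constructor
    · intro h
      rcases E h with h' | ⟨_, h2⟩
      · exact Or.inl h'
      · exact Or.imp SameCycle.symm SameCycle.symm h2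
    · intro h
      exact (hA' (Or.imp SameCycle.symm SameCycle.symm h)).symm
  have claim2 : ∀ {x : α}, ¬ σ'.SameCycle x a → orbitF σ' x = orbitF σ x := by
    intro x hx
    have hxa : ¬ σ.SameCycle x a := fun h => hx (hA' (Or.inl h))
    have hxb : ¬ σ.SameCycle x b := fun h => hx (hA' (Or.inr h))
    have hxb' : ¬ σ'.SameCycle x b := fun h => hx (hor (Or.inr h))
    ext y
    simp only [mem_orbitF]
    constructor
    · intro h
      rcases E h with h' | ⟨h1, _⟩
      · exact h'
      · exact absurd h1 (by rintro (h | h); exacts [hxa h, hxb h])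
    · intro h
      rcases E' h with h' | ⟨h1, _⟩
      · exact h'
      · exact absurd h1 (by rintro (h | h); exacts [hx h, hxb' h])
  -- counting
  set A := orbitF σ a ∪ orbitF σ b with hA2
  set D := Finset.univ.filter (fun x => ¬ σ'.SameCycle x a) with hD
  have hI' : Finset.univ.image (orbitF σ') = insert A (D.image (orbitF σ)) := by
    ext s
    simp only [Finset.mem_image, Finset.mem_insert, Finset.mem_filter, Finset.mem_univ,
      true_and, hD]
    constructor
    · rintro ⟨x, -, rfl⟩
      by_cases hx : σ'.SameCycle x a
      · exact Or.inl (claim1 hx)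
      · exact Or.inr ⟨x, hx, (claim2 hx).symm⟩
    · rintro (rfl | ⟨x, hx, rfl⟩)
      · exact ⟨a, claim1 (SameCycle.refl _ _)⟩
      · exact ⟨x, claim2 hx⟩
  have hI : Finset.univ.image (orbitF σ)
      = insert (orbitF σ a) (insert (orbitF σ b) (D.image (orbitF σ))) := by
    ext s
    simp only [Finset.mem_image, Finset.mem_insert, Finset.mem_filter, Finset.mem_univ,
      true_and, hD]
    constructor
    · rintro ⟨x, -, rfl⟩
      by_cases hxa : σ.SameCycle x a
      · exact Or.inl (orbitF_eq_of_sameCycle hxa.symm).symm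
      · by_cases hxb : σ.SameCycle x b
        · exact Or.inr (Or.inl (orbitF_eq_of_sameCycle hxb.symm).symm)
        · exact Or.inr (Or.inr ⟨x, fun h => (hA h).elim hxa hxb, rfl⟩)
    · rintro (rfl | rfl | ⟨x, hx, rfl⟩)
      · exact ⟨a, rfl⟩
      · exact ⟨b, rfl⟩
      · exact ⟨x, rfl⟩
  have hmemD : ∀ {x : α}, x ∈ D → ¬ σ'.SameCycle x a := by
    intro x hx; rw [hD, Finset.mem_filter] at hx; exact hx.2
  have hAnot : A ∉ D.image (orbitF σ) := by
    rintro hmem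
    obtain ⟨x, hx, hxe⟩ := Finset.mem_image.1 hmem
    have ha : a ∈ orbitF σ x := by
      rw [hxe, hA2]
      exact Finset.mem_union_left _ (self_mem_orbitF σ a)
    exact hmemD hx (hA' (Or.inl (mem_orbitF.1 ha)))
  have hanot : orbitF σ a ∉ insert (orbitF σ b) (D.image (orbitF σ)) := by
    rw [Finset.mem_insert]
    rintro (h | h)
    · exact hab (sameCycle_of_orbitF_eq h)
    · obtain ⟨x, hx, hxe⟩ := Finset.mem_image.1 h
      have := sameCycle_of_orbitF_eq hxe
      exact hmemD hx (hA' (Or.inl this))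
  have hbnot : orbitF σ b ∉ D.image (orbitF σ) := by
    intro h
    obtain ⟨x, hx, hxe⟩ := Finset.mem_image.1 h
    have := sameCycle_of_orbitF_eq hxe
    exact hmemD hx (hA' (Or.inr this))
  rw [kappa, kappa, hI, hI', Finset.card_insert_of_notMem hAnot,
    Finset.card_insert_of_notMem hanot, Finset.card_insert_of_notMem hbnot]

/-- split increases the number of orbits by exactly one. -/
lemma kappa_swap_mul_of_sameCycle {σ : Perm α} {a b : α} (hne : a ≠ b)
    (hab : σ.SameCycle a b) : kappa (Equiv.swap a b * σ) = kappa σ + 1 := by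
  set σ' := Equiv.swap a b * σ with hσ'
  have hss : Equiv.swap a b * σ' = σ := by
    rw [hσ', ← mul_assoc, Equiv.swap_mul_self, one_mul]
  have h := kappa_swap_mul_of_not_sameCycle (not_sameCycle_swap_mul_of_sameCycle hne hab)
  rw [hss] at h
  exact h

/-- refinement: if every `π`-orbit is contained in a `τ`-orbit, `τ` has fewer orbits. -/
lemma kappa_le_of_sameCycle_imp {τ π : Perm α}
    (h : ∀ x y : α, π.SameCycle x y → τ.SameCycle x y) : kappa τ ≤ kappa π := by
  classical
  have himg : Finset.univ.image (orbitF τ)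
      = (Finset.univ.image (orbitF π)).image
          (fun s => Finset.univ.filter (fun y => ∃ x ∈ s, τ.SameCycle x y)) := by
    rw [Finset.image_image]
    apply Finset.image_congr
    intro x _
    ext y
    simp only [Function.comp_apply, mem_orbitF, Finset.mem_filter, Finset.mem_univ, true_and]
    constructor
    · intro hy; exact ⟨x, SameCycle.refl _ _, hy⟩
    · rintro ⟨z, hz, hzy⟩
      exact (h x z hz).trans hzy
  rw [kappa, kappa, himg]
  exact Finset.card_image_le

lemma permLength_swap_mul_of_not_sameCycle {n : ℕ} {σ : Perm (Fin n)} {a b : Fin n}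
    (hab : ¬ σ.SameCycle a b) :
    permLength (Equiv.swap a b * σ) = permLength σ + 1 := by
  have h1 := kappa_swap_mul_of_not_sameCycle hab
  have h2 := permLength_add_kappa σ
  have h3 := permLength_add_kappa (Equiv.swap a b * σ)
  omega

lemma permLength_swap_mul_of_sameCycle {n : ℕ} {σ : Perm (Fin n)} {a b : Fin n}
    (hne : a ≠ b) (hab : σ.SameCycle a b) :
    permLength (Equiv.swap a b * σ) + 1 = permLength σ := by
  have h1 := kappa_swap_mul_of_sameCycle hne hab
  have h2 := permLength_add_kappa σ
  have h3 := permLength_add_kappa (Equiv.swap a b * σ)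
  omega

lemma permLength_mul_swap_of_sameCycle {n : ℕ} {σ : Perm (Fin n)} {a b : Fin n}
    (hne : a ≠ b) (hab : σ.SameCycle a b) :
    permLength (σ * Equiv.swap a b) + 1 = permLength σ := by
  have h1 : (σ * Equiv.swap a b)⁻¹ = Equiv.swap a b * σ⁻¹ := by
    rw [mul_inv_rev, Equiv.swap_inv]
  have h2 : σ⁻¹.SameCycle a b := Equiv.Perm.sameCycle_inv.2 hab
  rw [← permLength_inv (σ * Equiv.swap a b), h1]
  rw [permLength_swap_mul_of_sameCycle hne h2, permLength_inv]

lemma permLength_swap_mul_le {n : ℕ} {σ : Perm (Fin n)} {a b : Fin n} (hne : a ≠ b) :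
    permLength (Equiv.swap a b * σ) ≤ permLength σ + 1 := by
  by_cases hab : σ.SameCycle a b
  · have := permLength_swap_mul_of_sameCycle hne hab
    omega
  · exact le_of_eq (permLength_swap_mul_of_not_sameCycle hab)

lemma exists_ne_of_ne_one {n : ℕ} {σ : Perm (Fin n)} (h : σ ≠ 1) : ∃ x, σ x ≠ x := by
  by_contra hc
  push_neg at hc
  exact h (Equiv.ext fun x => hc x)

/-- subadditivity of permLength -/
lemma permLength_mul_le {n : ℕ} : ∀ (k : ℕ) (ρ τ : Perm (Fin n)), permLength ρ = k →
    permLength (ρ * τ) ≤ k + permLength τ := by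
  intro k
  induction k using Nat.strong_induction_on with
  | _ k ih =>
    intro ρ τ hk
    rcases Nat.eq_zero_or_pos k with rfl | hk0
    · have : ρ = 1 := permLength_eq_zero_iff.1 hk
      subst this; simp
    · have hρ1 : ρ ≠ 1 := fun h => by rw [h, permLength_one] at hk; omega
      obtain ⟨x, hx⟩ := exists_ne_of_ne_one hρ1
      have hne : x ≠ ρ x := fun h => hx h.symm
      set t := Equiv.swap x (ρ x) with ht
      have hcut : permLength (t * ρ) + 1 = permLength ρ :=
        permLength_swap_mul_of_sameCycle hne ⟨1, by simp⟩
      have hid : ρ * τ = t * ((t * ρ) * τ) := by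
        rw [← mul_assoc, ← mul_assoc, ht, Equiv.swap_mul_self, one_mul]
      rw [hid]
      calc permLength (t * ((t * ρ) * τ)) ≤ permLength ((t * ρ) * τ) + 1 :=
            permLength_swap_mul_le hne
        _ ≤ (permLength (t * ρ) + permLength τ) + 1 := by
            have := ih (permLength (t * ρ)) (by omega) (t * ρ) τ rfl
            omega
        _ ≤ k + permLength τ := by omega

lemma sameCycle_imp_of_pointwise {τ ρ : Perm α} (H : ∀ x, τ.SameCycle x (ρ x)) {a b : α}
    (h : ρ.SameCycle a b) : τ.SameCycle a b := by
  obtain ⟨i, hi⟩ := h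
  subst hi
  induction i using Int.induction_on with
  | zero => simpa using SameCycle.refl τ a
  | succ k ihp =>
    have hstep : (ρ ^ ((k : ℤ) + 1)) a = ρ ((ρ ^ (k : ℤ)) a) := by
      rw [add_comm, zpow_one_add, Equiv.Perm.mul_apply]
    rw [hstep]
    exact ihp.trans (H _)
  | pred k ihn =>
    have hstep : (ρ ^ (-(k : ℤ) - 1)) a = ρ⁻¹ ((ρ ^ (-(k : ℤ))) a) := by
      rw [sub_eq_add_neg, add_comm, zpow_add, zpow_neg_one, Equiv.Perm.mul_apply]
    rw [hstep]
    have h2 : τ.SameCycle (ρ⁻¹ ((ρ ^ (-(k : ℤ))) a)) ((ρ ^ (-(k : ℤ))) a) := by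
      simpa using H (ρ⁻¹ ((ρ ^ (-(k : ℤ))) a))
    exact ihn.trans h2.symm

/-- Main recursion. -/
lemma feray_aux {n : ℕ} : ∀ (k : ℕ) (ρ τ : Perm (Fin n)), permLength ρ = k →
    ∃ ρ' τ' : Perm (Fin n), ρ' * τ' = ρ * τ ∧
      permLength ρ' + permLength τ' = permLength ρ + permLength τ ∧
      permLength τ' = permLength (τ' * τ⁻¹) + permLength τ ∧
      (∀ a b : Fin n, ρ'.SameCycle a b → τ'.SameCycle a b) := by
  intro k
  induction k using Nat.strong_induction_on with
  | _ k ih =>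
    intro ρ τ hk
    by_cases hforall : ∀ x, τ.SameCycle x (ρ x)
    · refine ⟨ρ, τ, rfl, rfl, ?_, fun a b h => sameCycle_imp_of_pointwise hforall h⟩
      rw [mul_inv_cancel, permLength_one, zero_add]
    · push_neg at hforall
      obtain ⟨x, hx⟩ := hforall
      have hρx : ρ x ≠ x := fun h => hx (by rw [h])
      have hne : x ≠ ρ x := fun h => hρx h.symm
      set t := Equiv.swap x (ρ x) with ht
      set ρ₂ := ρ * t with hρ₂def
      set τ₂ := t * τ with hτ₂def
      have hprod : ρ₂ * τ₂ = ρ * τ := by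
        rw [hρ₂def, hτ₂def, mul_assoc, ← mul_assoc t t τ, ht, Equiv.swap_mul_self, one_mul]
      have hcut : permLength ρ₂ + 1 = permLength ρ :=
        permLength_mul_swap_of_sameCycle hne ⟨1, by simp⟩
      have hmerge : permLength τ₂ = permLength τ + 1 :=
        permLength_swap_mul_of_not_sameCycle hx
      obtain ⟨ρ', τ', hp, hsum, hgeo, horb⟩ :=
        ih (permLength ρ₂) (by omega) ρ₂ τ₂ rfl
      refine ⟨ρ', τ', hp.trans hprod, by omega, ?_, horb⟩
      -- geodesic transfer
      have hτ₂inv : τ' * τ⁻¹ = (τ' * τ₂⁻¹) * t := by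
        rw [hτ₂def, mul_inv_rev, ht, Equiv.swap_inv, ← ht, mul_assoc, mul_assoc,
          ht, Equiv.swap_mul_self, mul_one]
      have tri1 : permLength (τ' * τ⁻¹) ≤ permLength (τ' * τ₂⁻¹) + 1 := by
        rw [hτ₂inv]
        calc permLength ((τ' * τ₂⁻¹) * t) ≤ permLength (τ' * τ₂⁻¹) + permLength t :=
              permLength_mul_le _ _ _ rfl
          _ = permLength (τ' * τ₂⁻¹) + 1 := by rw [ht, permLength_swap hne]
      have tri2 : permLength τ' ≤ permLength (τ' * τ⁻¹) + permLength τ := by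
        have : (τ' * τ⁻¹) * τ = τ' := inv_mul_cancel_right τ' τ
        calc permLength τ' = permLength ((τ' * τ⁻¹) * τ) := by rw [this]
          _ ≤ permLength (τ' * τ⁻¹) + permLength τ := permLength_mul_le _ _ _ rfl
      omega

/-- Féray's lemma: a factorization `π = σ₁σ₂` can be modified to a
factorization `π = σ₁′σ₂′` of the same total length with every orbit of `σ₁′` contained
in some orbit of `σ₂′`, with `|σ₂′| = |σ₂′σ₂⁻¹| + |σ₂|` and `κ(σ₂′) ≤ κ(π)`. -/
theorem feray_lemma {n : ℕ} (π σ₁ σ₂ : Equiv.Perm (Fin n)) (h : π = σ₁ * σ₂) :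
    ∃ σ₁' σ₂' : Equiv.Perm (Fin n),
      π = σ₁' * σ₂' ∧
      permLength σ₁' + permLength σ₂' = permLength σ₁ + permLength σ₂ ∧
      permLength σ₂' = permLength (σ₂' * σ₂⁻¹) + permLength σ₂ ∧
      (∀ a b : Fin n, σ₁'.SameCycle a b → σ₂'.SameCycle a b) ∧
      numCycles σ₂' ≤ numCycles π := by
  obtain ⟨σ₁', σ₂', hp, hsum, hgeo, horb⟩ := feray_aux (permLength σ₁) σ₁ σ₂ rfl
  have hπ : π = σ₁' * σ₂' := by rw [h, hp]
  refine ⟨σ₁', σ₂', hπ, hsum, hgeo, horb, ?_⟩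
  rw [numCycles_eq_kappa, numCycles_eq_kappa]
  apply kappa_le_of_sameCycle_imp
  intro x y hxy
  refine sameCycle_imp_of_pointwise (τ := σ₂') (ρ := π) ?_ hxy
  intro z
  have h1 : σ₂'.SameCycle z (σ₂' z) := ⟨1, by simp⟩
  have h2 : σ₂'.SameCycle (σ₂' z) (σ₁' (σ₂' z)) := horb _ _ ⟨1, by simp⟩
  have h3 : π z = σ₁' (σ₂' z) := by rw [hπ]; rfl
  rw [h3]
  exact h1.trans h2
end

section
/- Let A be a commutative ℚ-algebra and let B₂, B₃, … ∈ A (with all but finitely many, or formally all, entering the power series below). Set φ(z) = 1 − ∑_{i≥2} B_i z^i ∈ A[[z]]. Let ψ(z) ∈ A[[z]] be the compositional inverse of z/φ(z) (both are power series of the form z + higher order terms), and define R(z) = z/ψ(z) = 1 + ∑_{k≥1} R_k z^k (the coefficients R_k are the free cumulants associated with the Boolean cumulants B_i). Then for every integer k ≥ 1: R_{k+1} = −(1/k)·[z^{k+1}] φ(z)^k, and B_{k+1} = (1/k)·[z^{k+1}] R(z)^k. -/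
open scoped BigOperators

/-- Formal composition `f ∘ g` of power series; it agrees with genuine substitution
when `g` has zero constant term. -/
noncomputable def psComp {A : Type*} [CommRing A] (f g : PowerSeries A) : PowerSeries A :=
  PowerSeries.mk fun m =>
    ∑ j ∈ Finset.range (m + 1), PowerSeries.coeff j f * PowerSeries.coeff m (g ^ j)

namespace BFCaux

open PowerSeries Finset Polynomial

variable {A : Type*} [CommRing A]

lemma X_cancel {a b : PowerSeries A} (h : PowerSeries.X * a = PowerSeries.X * b) : a = b := by
  ext n
  have := congrArg (PowerSeries.coeff (n + 1)) h
  rwa [PowerSeries.coeff_succ_X_mul, PowerSeries.coeff_succ_X_mul] at this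

lemma coeff_psComp (f ψ : PowerSeries A) (m : ℕ) :
    PowerSeries.coeff m (psComp f ψ) =
      ∑ j ∈ Finset.range (m + 1), PowerSeries.coeff j f * PowerSeries.coeff m (ψ ^ j) := by
  simp [psComp, PowerSeries.coeff_mk]

lemma coeff_pow_psi {ψ u : PowerSeries A} (hXu : ψ = PowerSeries.X * u) {m j : ℕ} (h : m < j) :
    PowerSeries.coeff m (ψ ^ j) = 0 := by
  rw [hXu, mul_pow, PowerSeries.coeff_X_pow_mul', if_neg (by omega)]

lemma coeff_aeval {ψ u : PowerSeries A} (hXu : ψ = PowerSeries.X * u) (p : Polynomial A) (m : ℕ) :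
    PowerSeries.coeff m (Polynomial.aeval ψ p) =
      ∑ j ∈ Finset.range (m + 1), p.coeff j * PowerSeries.coeff m (ψ ^ j) := by
  have hd : p.natDegree < max (m + 1) (p.natDegree + 1) :=
    lt_of_lt_of_le (Nat.lt_succ_self _) (le_max_right _ _)
  rw [Polynomial.aeval_eq_sum_range' hd, map_sum]
  have h1 : ∀ i ∈ Finset.range (max (m + 1) (p.natDegree + 1)),
      PowerSeries.coeff m (p.coeff i • ψ ^ i) = p.coeff i * PowerSeries.coeff m (ψ ^ i) := by
    intro i _; rw [LinearMap.map_smul, smul_eq_mul]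
  rw [Finset.sum_congr rfl h1]
  refine (Finset.sum_subset (Finset.range_subset_range.2 (le_max_left _ _)) ?_).symm
  intro i _ hi
  rw [coeff_pow_psi hXu (by simpa using hi), mul_zero]

lemma coeff_psComp_eq_aeval_trunc {ψ u : PowerSeries A} (hXu : ψ = PowerSeries.X * u)
    (f : PowerSeries A) {m N : ℕ} (h : m < N) :
    PowerSeries.coeff m (psComp f ψ) =
      PowerSeries.coeff m (Polynomial.aeval ψ (PowerSeries.trunc N f)) := by
  rw [coeff_psComp, coeff_aeval hXu]
  refine Finset.sum_congr rfl fun j hj => ?_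
  rw [PowerSeries.coeff_trunc, if_pos (by simp at hj; omega)]

lemma psComp_one {ψ u : PowerSeries A} (hXu : ψ = PowerSeries.X * u) :
    psComp 1 ψ = 1 := by
  ext m
  rw [coeff_psComp]
  simp only [PowerSeries.coeff_one]
  rw [Finset.sum_eq_single 0]
  · simp
  · intro b _ hb; simp [hb]
  · intro h; simp at h

lemma psComp_X {ψ u : PowerSeries A} (hXu : ψ = PowerSeries.X * u) :
    psComp PowerSeries.X ψ = ψ := by
  ext m
  rw [coeff_psComp]
  simp only [PowerSeries.coeff_X]
  rw [Finset.sum_eq_single 1]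
  · rcases Nat.eq_zero_or_pos m with hm | hm
    · subst hm
      simp [hXu]
    · simp
  · intro b _ hb; simp [hb]
  · intro h
    simp only [Finset.mem_range, not_lt] at h
    have : m = 0 := by omega
    subst this
    simp [hXu]

lemma psComp_sub {ψ : PowerSeries A} (f g : PowerSeries A) :
    psComp (f - g) ψ = psComp f ψ - psComp g ψ := by
  ext m
  rw [map_sub, coeff_psComp, coeff_psComp, coeff_psComp, ← Finset.sum_sub_distrib]
  refine Finset.sum_congr rfl fun j _ => ?_
  rw [map_sub, sub_mul]

lemma psComp_mul {ψ u : PowerSeries A} (hXu : ψ = PowerSeries.X * u) (f g : PowerSeries A) :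
    psComp (f * g) ψ = psComp f ψ * psComp g ψ := by
  ext m
  rw [coeff_psComp_eq_aeval_trunc hXu _ (Nat.lt_succ_self m), PowerSeries.coeff_mul]
  have h1 : ∀ p ∈ Finset.HasAntidiagonal.antidiagonal m,
      PowerSeries.coeff p.1 (psComp f ψ) * PowerSeries.coeff p.2 (psComp g ψ) =
      PowerSeries.coeff p.1 (Polynomial.aeval ψ (PowerSeries.trunc (m+1) f)) *
        PowerSeries.coeff p.2 (Polynomial.aeval ψ (PowerSeries.trunc (m+1) g)) := by
    intro p hp
    rw [Finset.HasAntidiagonal.mem_antidiagonal] at hp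
    rw [coeff_psComp_eq_aeval_trunc hXu f (N := m+1) (by omega),
      coeff_psComp_eq_aeval_trunc hXu g (N := m+1) (by omega)]
  rw [Finset.sum_congr rfl h1, ← PowerSeries.coeff_mul, ← map_mul]
  rw [coeff_aeval hXu, coeff_aeval hXu]
  refine Finset.sum_congr rfl fun j hj => ?_
  simp only [Finset.mem_range] at hj
  congr 1
  rw [Polynomial.coeff_mul, PowerSeries.coeff_trunc, if_pos (by omega), PowerSeries.coeff_mul]
  refine Finset.sum_congr rfl fun p hp => ?_
  rw [Finset.HasAntidiagonal.mem_antidiagonal] at hp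
  rw [PowerSeries.coeff_trunc, PowerSeries.coeff_trunc, if_pos (by omega), if_pos (by omega)]

lemma psComp_pow {ψ u : PowerSeries A} (hXu : ψ = PowerSeries.X * u) (f : PowerSeries A) (j : ℕ) :
    psComp (f ^ j) ψ = (psComp f ψ) ^ j := by
  induction j with
  | zero => simpa using psComp_one hXu
  | succ i ih => rw [pow_succ, psComp_mul hXu, ih, pow_succ]

lemma aeval_deriv (ψ : PowerSeries A) (p : Polynomial A) :
    d⁄dX A (Polynomial.aeval ψ p) =
      Polynomial.aeval ψ (Polynomial.derivative p) * d⁄dX A ψ := by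
  induction p using Polynomial.induction_on' with
  | add p q hp hq => rw [map_add, map_add, map_add, hp, hq, ← add_mul, map_add]
  | monomial j a =>
    rw [Polynomial.aeval_monomial, Polynomial.derivative_monomial, Polynomial.aeval_monomial]
    have hC : algebraMap A (PowerSeries A) = PowerSeries.C := rfl
    cases j with
    | zero =>
      simp [hC]
    | succ i =>
      rw [Derivation.leibniz, Derivation.leibniz_pow, hC, PowerSeries.derivative_C (R := A)]
      have h2 : (PowerSeries.C) (a * ((i:ℕ) + 1 : ℕ)) =
          PowerSeries.C a * (((i : PowerSeries A)) + 1) := by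
        simp only [Nat.cast_add, Nat.cast_one, map_mul, map_add, map_one, map_natCast]
      simp only [smul_eq_mul, smul_zero, add_zero, Nat.add_sub_cancel, h2, nsmul_eq_mul]
      push_cast
      ring

lemma psComp_deriv {ψ u : PowerSeries A} (hXu : ψ = PowerSeries.X * u) (f : PowerSeries A) :
    d⁄dX A (psComp f ψ) = psComp (d⁄dX A f) ψ * d⁄dX A ψ := by
  ext m
  rw [PowerSeries.coeff_derivative,
    coeff_psComp_eq_aeval_trunc hXu f (N := m + 2) (by omega),
    ← PowerSeries.coeff_derivative, aeval_deriv]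
  rw [PowerSeries.coeff_mul, PowerSeries.coeff_mul]
  refine Finset.sum_congr rfl fun p hp => ?_
  rw [Finset.HasAntidiagonal.mem_antidiagonal] at hp
  congr 1
  rw [coeff_aeval hXu, coeff_psComp]
  refine Finset.sum_congr rfl fun j hj => ?_
  simp only [Finset.mem_range] at hj
  rw [Polynomial.coeff_derivative, PowerSeries.coeff_trunc, if_pos (by omega),
    PowerSeries.coeff_derivative]

section rational
variable [Algebra ℚ A]

lemma nsmul_cancel {t : ℕ} (ht : 0 < t) {x : A} (h : t • x = 0) : x = 0 := by
  have h1 : ((t : ℚ)) • x = 0 := by rw [Nat.cast_smul_eq_nsmul]; exact h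
  have h2 := congrArg (fun y => ((t : ℚ))⁻¹ • y) h1
  simpa [smul_smul, inv_mul_cancel₀ (show (t:ℚ) ≠ 0 by exact_mod_cast ht.ne')] using h2

lemma pow_cancel {u w : PowerSeries A} (huw : u * w = 1) (a b : ℕ) :
    w ^ (a + b) * u ^ b = w ^ a := by
  induction b with
  | zero => simp
  | succ i ih =>
    have h : w ^ (a + (i+1)) * u ^ (i+1) = (w ^ (a+i) * u ^ i) * (u * w) := by ring
    rw [h, huw, mul_one, ih]

lemma res_lemma {ψ u w : PowerSeries A} (hXu : ψ = PowerSeries.X * u) (huw : u * w = 1)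
    (hψ1 : PowerSeries.coeff 1 ψ = 1) (t : ℕ) :
    PowerSeries.coeff t (w ^ (t + 1) * d⁄dX A ψ) = if t = 0 then 1 else 0 := by
  have hu0 : PowerSeries.constantCoeff u = 1 := by
    have h := hψ1
    rw [hXu, PowerSeries.coeff_succ_X_mul] at h
    simpa [PowerSeries.coeff_zero_eq_constantCoeff] using h
  have hw0 : PowerSeries.constantCoeff w = 1 := by
    have h := congrArg (PowerSeries.constantCoeff) huw
    simpa [hu0] using h
  have hψd : d⁄dX A ψ = u + PowerSeries.X * d⁄dX A u := by
    rw [hXu, Derivation.leibniz, PowerSeries.derivative_X]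
    simp only [smul_eq_mul, mul_one]
    ring
  cases t with
  | zero =>
    simp only [if_pos rfl, zero_add, pow_one]
    rw [PowerSeries.coeff_zero_eq_constantCoeff, map_mul, hw0, one_mul, hψd]
    simp [hu0, PowerSeries.coeff_derivative, hψ1]
  | succ s =>
    rw [if_neg (Nat.succ_ne_zero s)]
    have h0 : u * d⁄dX A w + w * d⁄dX A u = 0 := by
      have h := congrArg (d⁄dX A) huw
      simpa [smul_eq_mul, add_comm] using h
    have hDw : d⁄dX A w = -(w ^ 2 * d⁄dX A u) := by
      linear_combination w * h0 - (d⁄dX A w) * huw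
    have hkey : (s+1) • (w ^ (s+2) * d⁄dX A ψ)
        = (s+1) • w ^ (s+1) - PowerSeries.X * d⁄dX A (w ^ (s+1)) := by
      rw [hψd, Derivation.leibniz_pow, Nat.add_sub_cancel, hDw]
      simp only [smul_eq_mul, nsmul_eq_mul]
      push_cast
      linear_combination (((s : PowerSeries A)) + 1) * w ^ (s+1) * huw
    have hco := congrArg (PowerSeries.coeff (s+1)) hkey
    rw [map_nsmul, map_sub, map_nsmul, PowerSeries.coeff_succ_X_mul,
      PowerSeries.coeff_derivative] at hco
    have hz : (s+1) • PowerSeries.coeff (s+1) (w ^ (s+2) * d⁄dX A ψ) = 0 := by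
      rw [hco]
      simp only [nsmul_eq_mul]
      push_cast
      ring
    exact nsmul_cancel (Nat.succ_pos s) hz

lemma cov {ψ u w : PowerSeries A} (hXu : ψ = PowerSeries.X * u) (huw : u * w = 1)
    (hψ1 : PowerSeries.coeff 1 ψ = 1) (g : PowerSeries A) (N : ℕ) :
    PowerSeries.coeff N (w ^ (N+1) * psComp g ψ * d⁄dX A ψ) = PowerSeries.coeff N g := by
  have hM : w ^ (N+1) * psComp g ψ * d⁄dX A ψ = (w ^ (N+1) * d⁄dX A ψ) * psComp g ψ := by ring
  rw [hM, PowerSeries.coeff_mul]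
  have h1 : ∀ p ∈ Finset.HasAntidiagonal.antidiagonal N,
      PowerSeries.coeff p.1 (w ^ (N+1) * d⁄dX A ψ) * PowerSeries.coeff p.2 (psComp g ψ)
      = ∑ d ∈ Finset.range (N+1), PowerSeries.coeff d g *
          (PowerSeries.coeff p.1 (w ^ (N+1) * d⁄dX A ψ) * PowerSeries.coeff p.2 (ψ ^ d)) := by
    intro p hp
    rw [Finset.HasAntidiagonal.mem_antidiagonal] at hp
    rw [coeff_psComp]
    rw [← Finset.sum_subset (show Finset.range (p.2+1) ⊆ Finset.range (N+1) by
        apply Finset.range_subset_range.2; omega)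
      (fun d _ hd => by
        rw [coeff_pow_psi hXu (by simp at hd ⊢; omega)]
        ring)]
    rw [Finset.mul_sum]
    exact Finset.sum_congr rfl fun d _ => by ring
  rw [Finset.sum_congr rfl h1, Finset.sum_comm]
  have h2 : ∀ d ∈ Finset.range (N+1),
      PowerSeries.coeff N ((w ^ (N+1) * d⁄dX A ψ) * ψ ^ d) = if d = N then 1 else 0 := by
    intro d hd
    simp only [Finset.mem_range] at hd
    obtain ⟨e, rfl⟩ : ∃ e, N = d + e := ⟨N - d, by omega⟩
    have h3 : (w ^ (d+e+1) * d⁄dX A ψ) * ψ ^ d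
        = PowerSeries.X ^ d * (w ^ (e+1) * d⁄dX A ψ) := by
      rw [hXu, mul_pow, ← pow_cancel huw (e+1) d]
      ring
    rw [h3, show d + e = e + d by omega, PowerSeries.coeff_X_pow_mul,
      res_lemma hXu huw hψ1 e]
    by_cases he : e = 0
    · subst he; simp
    · rw [if_neg he, if_neg (by omega)]
  calc ∑ d ∈ Finset.range (N+1), ∑ p ∈ Finset.HasAntidiagonal.antidiagonal N,
        PowerSeries.coeff d g *
          (PowerSeries.coeff p.1 (w ^ (N+1) * d⁄dX A ψ) * PowerSeries.coeff p.2 (ψ ^ d))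
      = ∑ d ∈ Finset.range (N+1), PowerSeries.coeff d g *
          PowerSeries.coeff N ((w ^ (N+1) * d⁄dX A ψ) * ψ ^ d) := by
        refine Finset.sum_congr rfl fun d _ => ?_
        rw [PowerSeries.coeff_mul, Finset.mul_sum]
    _ = ∑ d ∈ Finset.range (N+1), PowerSeries.coeff d g * (if d = N then 1 else 0) := by
        refine Finset.sum_congr rfl fun d hd => ?_
        rw [h2 d hd]
    _ = PowerSeries.coeff N g := by
        rw [Finset.sum_eq_single N]
        · simp
        · intro b _ hb; simp [hb]
        · intro h; simp at h

end rational

end BFCaux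

/-- relation between Boolean cumulants `B_i` and free cumulants `R_k`.
Here `φ(z) = 1 - ∑_{i≥2} B_i z^i`; the power series `ψ` is the compositional inverse of
`z/φ(z)` (equivalently, `ψ = z ⋅ φ(ψ(z))`), and `R(z) = z/ψ(z)` (equivalently
`R ⋅ ψ = z`), so that `R(z) = 1 + ∑_{k≥1} R_k z^k` with `R_k` the free cumulants. Then
`R_{k+1} = -(1/k)[z^{k+1}] φ(z)^k` and `B_{k+1} = (1/k)[z^{k+1}] R(z)^k`. -/
theorem boolean_free_cumulants_lagrange {A : Type*} [CommRing A] [Algebra ℚ A]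
    (B : ℕ → A) (φ ψ R : PowerSeries A)
    (hφ : φ = 1 - PowerSeries.mk (fun i => if 2 ≤ i then B i else 0))
    (hψ0 : PowerSeries.constantCoeff ψ = 0)
    (hψ1 : PowerSeries.coeff 1 ψ = 1)
    (hψ : ψ = PowerSeries.X * psComp φ ψ)
    (hR : R * ψ = PowerSeries.X)
    (k : ℕ) (hk : 1 ≤ k) :
    PowerSeries.coeff (k + 1) R =
        -(algebraMap ℚ A (1 / k) * PowerSeries.coeff (k + 1) (φ ^ k)) ∧
      B (k + 1) = algebraMap ℚ A (1 / k) * PowerSeries.coeff (k + 1) (R ^ k) := by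
  classical
  open BFCaux PowerSeries in
  obtain ⟨m, rfl⟩ : ∃ m, k = m + 1 := ⟨k - 1, by omega⟩
  -- basic facts about φ
  have hφc : PowerSeries.coeff (m + 1 + 1) φ = - B (m + 1 + 1) := by
    rw [hφ, map_sub, PowerSeries.coeff_mk, PowerSeries.coeff_one,
      if_neg (by omega), if_pos (by omega)]
    ring
  -- the series u with ψ = X * u
  set u : PowerSeries A := PowerSeries.mk fun i => PowerSeries.coeff (i+1) ψ with hu
  have hXu : ψ = PowerSeries.X * u := by
    ext i
    cases i with
    | zero =>
      rw [PowerSeries.coeff_zero_X_mul]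
      simpa [PowerSeries.coeff_zero_eq_constantCoeff] using hψ0
    | succ i => rw [PowerSeries.coeff_succ_X_mul, hu, PowerSeries.coeff_mk]
  have hu0 : PowerSeries.constantCoeff u = 1 := by
    rw [hu]
    simpa [PowerSeries.constantCoeff_mk] using hψ1
  set w : PowerSeries A := PowerSeries.invOfUnit u 1 with hw
  have huw : u * w = 1 := PowerSeries.mul_invOfUnit u 1 (by simpa using hu0)
  -- R = w
  have hRu : R * u = 1 := by
    apply X_cancel (A := A)
    rw [mul_one]
    calc PowerSeries.X * (R * u) = R * (PowerSeries.X * u) := by ring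
    _ = PowerSeries.X := by rw [← hXu, hR]
  have hRw : R = w := by
    calc R = R * (u * w) := by rw [huw, mul_one]
    _ = (R * u) * w := by ring
    _ = w := by rw [hRu, one_mul]
  -- psComp φ ψ = u
  have hcφ : psComp φ ψ = u := by
    apply X_cancel (A := A)
    rw [← hXu, ← hψ]
  -- derivative facts
  have hψd : d⁄dX A ψ = u + PowerSeries.X * d⁄dX A u := by
    rw [hXu, Derivation.leibniz, PowerSeries.derivative_X]
    simp only [smul_eq_mul, mul_one]
    ring
  have hDu : d⁄dX A u = psComp (d⁄dX A φ) ψ * d⁄dX A ψ := by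
    rw [← hcφ, psComp_deriv hXu]
  have hI1 : d⁄dX A ψ * psComp (φ - PowerSeries.X * d⁄dX A φ) ψ = u ^ 2 := by
    rw [psComp_sub, psComp_mul hXu, psComp_X hXu, hcφ]
    linear_combination u * hψd + (PowerSeries.X * u) * hDu
      + (- (d⁄dX A ψ) * psComp (d⁄dX A φ) ψ) * hXu
  -- the master computation
  have hS : ∀ j : ℕ, PowerSeries.coeff (m + 1 + 1) (w ^ (m + 1 + 1 + 1) * psComp (φ ^ (j+2)) ψ)
      = PowerSeries.coeff (m + 1 + 1) (φ ^ j * (φ - PowerSeries.X * d⁄dX A φ)) := by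
    intro j
    have h2 : psComp (φ ^ (j+2)) ψ
        = psComp (φ ^ j * (φ - PowerSeries.X * d⁄dX A φ)) ψ * d⁄dX A ψ := by
      rw [psComp_mul hXu]
      simp only [psComp_pow hXu, hcφ]
      calc u ^ (j+2) = u ^ j * u ^ 2 := by ring
      _ = u ^ j * (d⁄dX A ψ * psComp (φ - PowerSeries.X * d⁄dX A φ) ψ) := by rw [hI1]
      _ = u ^ j * psComp (φ - PowerSeries.X * d⁄dX A φ) ψ * d⁄dX A ψ := by ring
    rw [show w ^ (m + 1 + 1 + 1) * psComp (φ ^ (j+2)) ψ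
        = w ^ (m + 1 + 1 + 1) * (psComp (φ ^ (j+2)) ψ) by ring, h2,
      show w ^ (m + 1 + 1 + 1) * (psComp (φ ^ j * (φ - PowerSeries.X * d⁄dX A φ)) ψ * d⁄dX A ψ)
        = w ^ (m + 1 + 1 + 1) * psComp (φ ^ j * (φ - PowerSeries.X * d⁄dX A φ)) ψ * d⁄dX A ψ
        by ring,
      cov hXu huw hψ1]
  -- first claim
  have hA0 : PowerSeries.coeff (m + 1 + 1) R
      = PowerSeries.coeff (m + 1 + 1) (φ ^ m * (φ - PowerSeries.X * d⁄dX A φ)) := by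
    have hwid : w = w ^ (m + 1 + 1 + 1) * psComp (φ ^ (m+2)) ψ := by
      rw [psComp_pow hXu, hcφ, show m + 1 + 1 + 1 = 1 + (m + 2) by omega,
        pow_cancel huw 1 (m+2), pow_one]
    rw [hRw, hwid, hS m]
  have hA1 : φ ^ m * (φ - PowerSeries.X * d⁄dX A φ)
      = φ ^ (m+1) - PowerSeries.X * (φ ^ m * d⁄dX A φ) := by ring
  have hA2 : (m+1) • PowerSeries.coeff (m+1) (φ ^ m * d⁄dX A φ)
      = PowerSeries.coeff (m+1+1) (φ ^ (m+1)) * ((m+1 : ℕ) + 1 : A) := by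
    have h3 : d⁄dX A (φ ^ (m+1)) = (m+1) • (φ ^ m * d⁄dX A φ) := by
      rw [Derivation.leibniz_pow, Nat.add_sub_cancel]
      simp only [smul_eq_mul]
    have h4 := congrArg (PowerSeries.coeff (m+1)) h3
    rw [PowerSeries.coeff_derivative, map_nsmul] at h4
    rw [← h4]
  have hfirst : (m+1) • PowerSeries.coeff (m + 1 + 1) R
      = - PowerSeries.coeff (m+1+1) (φ ^ (m+1)) := by
    rw [hA0, hA1, map_sub, PowerSeries.coeff_succ_X_mul, smul_sub, hA2]
    simp only [nsmul_eq_mul]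
    push_cast
    ring
  have hsmul_inv : ∀ x y : A, (m+1) • x = y → x = algebraMap ℚ A (1 / ((m+1 : ℕ) : ℚ)) * y := by
    intro x y hxy
    rw [← Algebra.smul_def, ← hxy, ← Nat.cast_smul_eq_nsmul ℚ, smul_smul,
      one_div, inv_mul_cancel₀ (by exact_mod_cast Nat.succ_ne_zero m), one_smul]
  constructor
  · refine (hsmul_inv _ _ hfirst).trans ?_
    push_cast
    ring
  -- second claim
  · have hB0 : PowerSeries.coeff (m + 1 + 1) (R ^ (m+1))
        = PowerSeries.coeff (m + 1 + 1) (φ ^ 0 * (φ - PowerSeries.X * d⁄dX A φ)) := by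
      have hwid : w ^ (m+1) = w ^ (m + 1 + 1 + 1) * psComp (φ ^ (0+2)) ψ := by
        rw [psComp_pow hXu, hcφ, show m + 1 + 1 + 1 = m + 1 + 2 by omega,
          pow_cancel huw (m+1) 2]
      rw [hRw, hwid, hS 0]
    have hB1 : PowerSeries.coeff (m + 1 + 1) (R ^ (m+1))
        = (1 + (m:A)) * B (m + 1 + 1) := by
      rw [hB0, pow_zero, one_mul, map_sub, PowerSeries.coeff_succ_X_mul,
        PowerSeries.coeff_derivative, hφc]
      push_cast
      ring
    have hB2 : (m+1) • B (m + 1 + 1) = PowerSeries.coeff (m + 1 + 1) (R ^ (m+1)) := by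
      rw [hB1]
      simp only [nsmul_eq_mul]
      push_cast
      ring
    refine (hsmul_inv _ _ hB2).trans ?_
    push_cast
    ring
end

section
/- Let n ≥ 1, let μ = (μ₁,…,μ_n) be a tuple of non-negative integers, let 1 ≤ k ≤ n, and let 1 ≤ i ≤ n. Writing μ^{(i)} = (μ₁,…,μ_{i−1}, μ_i−k, μ_{i+1},…,μ_n), the following identity holds: (n)_k · χ̃^{μ^{(i)}}_{(1^{n−k})} = χ̃^μ_{(1^n)} · (μ_i)_k · ∏_{j≠i} (μ_i−μ_j−k)/(μ_i−μ_j), provided μ_i ≥ k, all entries of μ are distinct, and all entries of μ^{(i)} are non-negative. Here (m)_k = m(m−1)⋯(m−k+1) is the falling power. -/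
open scoped BigOperators

/-- For a tuple `μ = (μ₁,…,μₙ)` of non-negative integers and a multiset `k` of positive
integers, `χ̃^μ_k` is the coefficient of `x^μ = x₁^{μ₁}⋯xₙ^{μₙ}` in
`(∑ᵢ xᵢ^{k₁}) ⋯ (∑ᵢ xᵢ^{k_r}) ⋅ ∑_{w ∈ Sₙ} sgn(w) x^{wδ}`, where `δ = (n-1,…,1,0)`. -/
noncomputable def chiTilde (n : ℕ) (μ : Fin n → ℕ) (k : Multiset ℕ) : ℤ :=
  MvPolynomial.coeff
    (Finsupp.equivFunOnFinite.symm μ)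
    ((Multiset.map (fun m => ∑ i : Fin n, MvPolynomial.X i ^ m) k).prod *
      ∑ w : Equiv.Perm (Fin n),
        MvPolynomial.C ((Equiv.Perm.sign w : ℤ)) *
          ∏ i : Fin n, MvPolynomial.X i ^ (n - 1 - ((w i : ℕ))))

namespace MacdonaldAux

open Finset MvPolynomial Nat

lemma prodXpow (n : ℕ) (d : Fin n → ℕ) :
    ∏ i : Fin n, (X i : MvPolynomial (Fin n) ℤ) ^ d i
      = monomial (Finsupp.equivFunOnFinite.symm d) 1 := by
  rw [monomial_eq, C_1, one_mul, Finsupp.prod_fintype]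
  · rfl
  · intro i; exact pow_zero _

lemma coeff_sum_X_pow (n m : ℕ) (ν : Fin n → ℕ) :
    MvPolynomial.coeff (Finsupp.equivFunOnFinite.symm ν)
      ((∑ i : Fin n, (X i : MvPolynomial (Fin n) ℤ)) ^ m)
      = if (∑ i, ν i) = m then (Nat.multinomial Finset.univ ν : ℤ) else 0 := by
  rw [Finset.sum_pow_eq_sum_piAntidiag, MvPolynomial.coeff_sum]
  have key : ∀ k ∈ piAntidiag (univ : Finset (Fin n)) m,
      MvPolynomial.coeff (Finsupp.equivFunOnFinite.symm ν)
        ((Nat.multinomial univ k : MvPolynomial (Fin n) ℤ) * ∏ i, X i ^ k i)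
      = if k = ν then (Nat.multinomial univ ν : ℤ) else 0 := by
    intro k _
    rw [prodXpow, ← C_eq_coe_nat, coeff_C_mul, coeff_monomial]
    by_cases h : k = ν
    · subst h; simp
    · rw [if_neg h, if_neg, mul_zero]
      exact fun hc => h (Finsupp.equivFunOnFinite.symm.injective hc)
  rw [Finset.sum_congr rfl key, Finset.sum_ite_eq']
  simp [mem_piAntidiag]

lemma sum_rev_aux (n : ℕ) (w : Equiv.Perm (Fin n)) :
    ∑ i : Fin n, (n - 1 - ((w i : ℕ))) = ∑ j : Fin n, (j : ℕ) := by
  rw [Equiv.sum_comp w (fun j : Fin n => n - 1 - (j : ℕ))]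
  rw [← Equiv.sum_comp (Fin.revPerm : Equiv.Perm (Fin n)) (fun j : Fin n => (j : ℕ))]
  exact Finset.sum_congr rfl fun j _ => by simp [Fin.revPerm, Fin.rev]; omega

lemma chiTilde_replicate (n m : ℕ) (μ : Fin n → ℕ) :
    chiTilde n μ (Multiset.replicate m 1)
      = ∑ w : Equiv.Perm (Fin n), (Equiv.Perm.sign w : ℤ) *
          (if (∀ i, n - 1 - ((w i : ℕ)) ≤ μ i) ∧ (∑ i, μ i) = m + ∑ j : Fin n, (j : ℕ)
            then (Nat.multinomial Finset.univ (fun i => μ i - (n - 1 - ((w i : ℕ)))) : ℤ)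
            else 0) := by
  rw [chiTilde, Multiset.map_replicate, Multiset.prod_replicate]
  simp only [pow_one]
  rw [Finset.mul_sum, MvPolynomial.coeff_sum]
  refine Finset.sum_congr rfl fun w _ => ?_
  rw [prodXpow, show ((∑ i : Fin n, (X i : MvPolynomial (Fin n) ℤ)) ^ m *
      (C ((Equiv.Perm.sign w : ℤ)) * monomial (Finsupp.equivFunOnFinite.symm
        (fun i => n - 1 - ((w i : ℕ)))) 1))
    = C ((Equiv.Perm.sign w : ℤ)) * ((∑ i : Fin n, (X i : MvPolynomial (Fin n) ℤ)) ^ m *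
      monomial (Finsupp.equivFunOnFinite.symm (fun i => n - 1 - ((w i : ℕ)))) 1) by ring,
    coeff_C_mul, coeff_mul_monomial']
  congr 1
  by_cases hle : (∀ i, n - 1 - ((w i : ℕ)) ≤ μ i)
  · have h1 : Finsupp.equivFunOnFinite.symm (fun i => n - 1 - ((w i : ℕ)))
        ≤ Finsupp.equivFunOnFinite.symm μ := by
      rw [Finsupp.le_def]; intro i; exact hle i
    rw [if_pos h1]
    have h2 : Finsupp.equivFunOnFinite.symm μ
          - Finsupp.equivFunOnFinite.symm (fun i => n - 1 - ((w i : ℕ)))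
        = Finsupp.equivFunOnFinite.symm (fun i => μ i - (n - 1 - ((w i : ℕ)))) := by
      ext i; simp [Finsupp.tsub_apply]
    rw [h2, coeff_sum_X_pow, mul_one]
    have h3 : (∑ i, (μ i - (n - 1 - ((w i : ℕ))))) = (∑ i, μ i) - ∑ j : Fin n, (j : ℕ) := by
      rw [← sum_rev_aux n w]
      exact Finset.sum_tsub_distrib univ (fun i _ => hle i)
    have h4 : (∑ j : Fin n, (j : ℕ)) ≤ ∑ i, μ i := by
      rw [← sum_rev_aux n w]
      exact Finset.sum_le_sum fun i _ => hle i
    have h5 : ((∑ i, (μ i - (n - 1 - ((w i : ℕ))))) = m)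
        ↔ ((∑ i, μ i) = m + ∑ j : Fin n, (j : ℕ)) := by
      rw [h3]; omega
    by_cases hc : (∑ i, μ i) = m + ∑ j : Fin n, (j : ℕ)
    · rw [if_pos (h5.mpr hc), if_pos ⟨hle, hc⟩]
    · rw [if_neg (fun h => hc (h5.mp h)), if_neg (fun h => hc h.2)]
  · rw [if_neg, if_neg (fun h => hle h.1)]
    rw [Finsupp.le_def]
    push_neg
    obtain ⟨i, hi⟩ := not_forall.mp hle
    exact ⟨i, by simpa using Nat.lt_of_not_le hi⟩

lemma det_desc (n : ℕ) (μ : Fin n → ℕ) :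
    ∑ w : Equiv.Perm (Fin n), ((Equiv.Perm.sign w : ℤ) : ℚ) *
        ∏ i : Fin n, (Nat.descFactorial (μ i) (n - 1 - ((w i : ℕ))) : ℚ)
      = ((Equiv.Perm.sign (Fin.revPerm : Equiv.Perm (Fin n)) : ℤ) : ℚ) *
          ∏ a : Fin n, ∏ b ∈ Finset.Ioi a, ((μ b : ℚ) - (μ a : ℚ)) := by
  have hM : ∑ w : Equiv.Perm (Fin n), ((Equiv.Perm.sign w : ℤ) : ℚ) *
        ∏ i : Fin n, (Nat.descFactorial (μ i) (n - 1 - ((w i : ℕ))) : ℚ)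
      = Matrix.det (Matrix.of fun a b : Fin n =>
          (Nat.descFactorial (μ b) (n - 1 - ((a : ℕ))) : ℚ)) := by
    rw [Matrix.det_apply']
    rfl
  rw [hM]
  have hsub : (Matrix.of fun a b : Fin n => (Nat.descFactorial (μ b) (n - 1 - ((a : ℕ))) : ℚ))
      = (Matrix.of fun a b : Fin n =>
          Polynomial.eval ((μ b : ℚ)) (descPochhammer ℚ ((a : ℕ)))).submatrix
         (Fin.revPerm : Equiv.Perm (Fin n)) id := by
    ext a b
    simp only [Matrix.submatrix_apply, Matrix.of_apply, id_eq]
    rw [descPochhammer_eval_eq_descFactorial]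
    congr 2
    simp [Fin.revPerm, Fin.rev]; omega
  rw [hsub, Matrix.det_permute]
  congr 1
  have hT : (Matrix.of fun a b : Fin n =>
        Polynomial.eval ((μ b : ℚ)) (descPochhammer ℚ ((a : ℕ))))
      = (Matrix.of fun i j : Fin n =>
          Polynomial.eval ((μ i : ℚ)) (descPochhammer ℚ ((j : ℕ)))).transpose := by
    ext a b; rfl
  rw [hT, Matrix.det_transpose,
    ← Matrix.det_eval_matrixOfPolynomials_eq_det_vandermonde (fun i => ((μ i : ℚ)))
      (fun j => descPochhammer ℚ ((j : ℕ)))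
      (fun j => descPochhammer_natDegree ((j : ℕ)) (R := ℚ))
      (fun j => monic_descPochhammer ℚ ((j : ℕ))),
    Matrix.det_vandermonde]

lemma multinomial_mul_fact (n m : ℕ) (μ d : Fin n → ℕ) (hle : ∀ i, d i ≤ μ i)
    (hsum : ∑ i, (μ i - d i) = m) :
    Nat.multinomial Finset.univ (fun i => μ i - d i) * ∏ i, (μ i)!
      = m ! * ∏ i, Nat.descFactorial (μ i) (d i) := by
  have h1 : ∏ i, (μ i)! = (∏ i, (μ i - d i)!) * ∏ i, Nat.descFactorial (μ i) (d i) := by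
    rw [← Finset.prod_mul_distrib]
    exact Finset.prod_congr rfl fun i _ => (Nat.factorial_mul_descFactorial (hle i)).symm
  rw [h1, ← mul_assoc, mul_comm (Nat.multinomial _ _), Nat.multinomial_spec, hsum]

lemma chiTilde_formula (n m : ℕ) (μ : Fin n → ℕ) :
    (chiTilde n μ (Multiset.replicate m 1) : ℚ) * ∏ i, ((μ i)! : ℚ)
      = if (∑ i, μ i) = m + ∑ j : Fin n, (j : ℕ)
        then ((Equiv.Perm.sign (Fin.revPerm : Equiv.Perm (Fin n)) : ℤ) : ℚ) * (m ! : ℚ) *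
          ∏ a : Fin n, ∏ b ∈ Finset.Ioi a, ((μ b : ℚ) - (μ a : ℚ))
        else 0 := by
  rw [chiTilde_replicate]
  push_cast
  rw [Finset.sum_mul]
  by_cases hc : (∑ i, μ i) = m + ∑ j : Fin n, (j : ℕ)
  · rw [if_pos hc, mul_assoc, mul_left_comm, ← det_desc n μ, Finset.mul_sum]
    refine Finset.sum_congr rfl fun w _ => ?_
    rw [mul_assoc, mul_left_comm ((m ! : ℕ) : ℚ)]
    congr 1
    by_cases hle : (∀ i, n - 1 - ((w i : ℕ)) ≤ μ i)
    · rw [if_pos ⟨hle, hc⟩]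
      have key := multinomial_mul_fact n m μ (fun i => n - 1 - ((w i : ℕ))) hle ?_
      · have := congrArg (fun x : ℕ => (x : ℚ)) key
        push_cast at this
        rw [this]
      · have h3 := Finset.sum_tsub_distrib (f := μ) (g := fun i => n - 1 - ((w i : ℕ)))
          Finset.univ (fun i _ => hle i)
        rw [h3, sum_rev_aux n w]; omega
    · rw [if_neg (fun h => hle h.1), zero_mul]
      obtain ⟨i, hi⟩ := not_forall.mp hle
      rw [Finset.prod_eq_zero (Finset.mem_univ i), mul_zero]
      rw [Nat.descFactorial_of_lt (Nat.lt_of_not_le hi)]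
      exact Nat.cast_zero (R := ℚ)
  · rw [if_neg hc]
    refine Finset.sum_eq_zero fun w _ => ?_
    rw [if_neg (fun h => hc h.2), mul_zero, zero_mul]

variable {n : ℕ}

lemma filter_lt_erase (i : Fin n) :
    (Finset.univ.erase i).filter (· < i) = Finset.Iio i := by
  ext a
  simp only [mem_filter, mem_erase, mem_univ, and_true, mem_Iio, true_and]
  constructor
  · exact fun h => h.2
  · exact fun h => ⟨Fin.ne_of_lt h, h⟩

lemma filter_not_lt_erase (i : Fin n) :
    (Finset.univ.erase i).filter (fun a => ¬ a < i) = Finset.Ioi i := by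
  ext a
  simp only [mem_filter, mem_erase, mem_univ, and_true, mem_Ioi, true_and]
  constructor
  · rintro ⟨h1, h2⟩; exact lt_of_le_of_ne (le_of_not_gt h2) (Ne.symm h1)
  · exact fun h => ⟨Fin.ne_of_gt h, not_lt_of_gt h⟩

lemma prod_erase_split (i : Fin n) (g : Fin n → ℚ) :
    ∏ j ∈ Finset.univ.erase i, g j
      = (∏ j ∈ Finset.Iio i, g j) * ∏ j ∈ Finset.Ioi i, g j := by
  rw [← Finset.prod_filter_mul_prod_filter_not (Finset.univ.erase i) (· < i),
    filter_lt_erase, filter_not_lt_erase]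

lemma prod_Ioi_split (i : Fin n) (f : Fin n → Fin n → ℚ) :
    ∏ a : Fin n, ∏ b ∈ Finset.Ioi a, f a b
      = ((∏ a ∈ Finset.Iio i, f a i) * ∏ b ∈ Finset.Ioi i, f i b) *
          ∏ a ∈ Finset.univ.erase i, ∏ b ∈ (Finset.Ioi a).erase i, f a b := by
  rw [← Finset.mul_prod_erase Finset.univ _ (Finset.mem_univ i)]
  have key : ∀ a ∈ Finset.univ.erase i,
      ∏ b ∈ Finset.Ioi a, f a b
        = (if a < i then f a i else 1) * ∏ b ∈ (Finset.Ioi a).erase i, f a b := by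
    intro a ha
    by_cases h : a < i
    · rw [if_pos h, Finset.mul_prod_erase (Finset.Ioi a) _ (Finset.mem_Ioi.mpr h)]
    · rw [if_neg h, one_mul, Finset.erase_eq_of_notMem]
      rw [Finset.mem_Ioi]; exact h
  rw [Finset.prod_congr rfl key, Finset.prod_mul_distrib, Finset.prod_ite, Finset.prod_const_one,
    mul_one, filter_lt_erase]
  ring

lemma vandermonde_update (v : Fin n → ℚ) (i : Fin n) (k : ℚ) :
    (∏ a : Fin n, ∏ b ∈ Finset.Ioi a, (Function.update v i (v i - k) b
        - Function.update v i (v i - k) a)) *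
      ∏ j ∈ Finset.univ.erase i, (v i - v j)
    = (∏ a : Fin n, ∏ b ∈ Finset.Ioi a, (v b - v a)) *
      ∏ j ∈ Finset.univ.erase i, (v i - v j - k) := by
  set v' := Function.update v i (v i - k) with hv'
  have hvi : v' i = v i - k := Function.update_self i _ v
  have hvj : ∀ j, j ≠ i → v' j = v j := fun j hj => Function.update_of_ne hj _ v
  rw [prod_Ioi_split i (fun a b => v' b - v' a), prod_Ioi_split i (fun a b => v b - v a),
    prod_erase_split i (fun j => v i - v j), prod_erase_split i (fun j => v i - v j - k)]
  have hT : ∏ a ∈ Finset.univ.erase i, ∏ b ∈ (Finset.Ioi a).erase i, (v' b - v' a)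
      = ∏ a ∈ Finset.univ.erase i, ∏ b ∈ (Finset.Ioi a).erase i, (v b - v a) := by
    refine Finset.prod_congr rfl fun a ha => Finset.prod_congr rfl fun b hb => ?_
    rw [hvj a (Finset.ne_of_mem_erase ha), hvj b (Finset.ne_of_mem_erase hb)]
  rw [hT]
  set T := ∏ a ∈ Finset.univ.erase i, ∏ b ∈ (Finset.Ioi a).erase i, (v b - v a)
  have hA' : ∏ a ∈ Finset.Iio i, (v' i - v' a) = ∏ a ∈ Finset.Iio i, (v i - k - v a) := by
    refine Finset.prod_congr rfl fun a ha => ?_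
    rw [hvi, hvj a (Fin.ne_of_lt (Finset.mem_Iio.mp ha))]
  have hB' : ∏ b ∈ Finset.Ioi i, (v' b - v' i) = ∏ b ∈ Finset.Ioi i, (v b - (v i - k)) := by
    refine Finset.prod_congr rfl fun b hb => ?_
    rw [hvi, hvj b (Fin.ne_of_gt (Finset.mem_Ioi.mp hb))]
  rw [hA', hB']
  have claim1 : (∏ a ∈ Finset.Iio i, (v i - k - v a)) * ∏ a ∈ Finset.Iio i, (v i - v a)
      = (∏ a ∈ Finset.Iio i, (v i - v a)) * ∏ a ∈ Finset.Iio i, (v i - v a - k) := by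
    rw [← Finset.prod_mul_distrib, ← Finset.prod_mul_distrib]
    exact Finset.prod_congr rfl fun a _ => by ring
  have claim2 : (∏ b ∈ Finset.Ioi i, (v b - (v i - k))) * ∏ b ∈ Finset.Ioi i, (v i - v b)
      = (∏ b ∈ Finset.Ioi i, (v b - v i)) * ∏ b ∈ Finset.Ioi i, (v i - v b - k) := by
    rw [← Finset.prod_mul_distrib, ← Finset.prod_mul_distrib]
    exact Finset.prod_congr rfl fun b _ => by ring
  calc ((∏ a ∈ Finset.Iio i, (v i - k - v a)) * ∏ b ∈ Finset.Ioi i, (v b - (v i - k))) * T *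
        ((∏ j ∈ Finset.Iio i, (v i - v j)) * ∏ j ∈ Finset.Ioi i, (v i - v j))
      = ((∏ a ∈ Finset.Iio i, (v i - k - v a)) * ∏ a ∈ Finset.Iio i, (v i - v a)) *
        ((∏ b ∈ Finset.Ioi i, (v b - (v i - k))) * ∏ b ∈ Finset.Ioi i, (v i - v b)) * T := by
        ring
    _ = ((∏ a ∈ Finset.Iio i, (v i - v a)) * ∏ a ∈ Finset.Iio i, (v i - v a - k)) *
        ((∏ b ∈ Finset.Ioi i, (v b - v i)) * ∏ b ∈ Finset.Ioi i, (v i - v b - k)) * T := by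
        rw [claim1, claim2]
    _ = _ := by ring

end MacdonaldAux

/-- Macdonald's identity: for `μ^{(i)} = (μ₁,…,μᵢ-k,…,μₙ)`,
`(n)_k ⋅ χ̃^{μ^{(i)}}_{(1^{n-k})} = χ̃^μ_{(1^n)} ⋅ (μᵢ)_k ⋅ ∏_{j≠i} (μᵢ-μⱼ-k)/(μᵢ-μⱼ)`. -/
theorem macdonald_identity (n : ℕ) (hn : 1 ≤ n) (μ : Fin n → ℕ) (k : ℕ)
    (hk1 : 1 ≤ k) (hkn : k ≤ n) (i : Fin n)
    (hik : k ≤ μ i) (hdistinct : Function.Injective μ) :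
    (Nat.descFactorial n k : ℚ) *
        (chiTilde n (Function.update μ i (μ i - k)) (Multiset.replicate (n - k) 1) : ℚ) =
      (chiTilde n μ (Multiset.replicate n 1) : ℚ) * (Nat.descFactorial (μ i) k : ℚ) *
        ∏ j ∈ Finset.univ.erase i, (((μ i : ℚ) - μ j - k) / ((μ i : ℚ) - μ j)) := by
  classical
  open Finset MacdonaldAux Nat in
  set μ' : Fin n → ℕ := Function.update μ i (μ i - k) with hμ'
  -- cast of μ'
  have hcast : (fun j => ((μ' j : ℕ) : ℚ))
      = Function.update (fun j => ((μ j : ℕ) : ℚ)) i ((μ i : ℚ) - (k : ℚ)) := by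
    funext j
    by_cases hj : j = i
    · subst hj
      rw [hμ', Function.update_self, Function.update_self, Nat.cast_sub hik]
    · rw [hμ', Function.update_of_ne hj, Function.update_of_ne hj]
  -- sums
  have hsum' : ∑ j, μ' j = (∑ j, μ j) - k := by
    rw [hμ', Finset.sum_update_of_mem (Finset.mem_univ i), ← Finset.erase_eq]
    have : ∑ j, μ j = μ i + ∑ j ∈ Finset.univ.erase i, μ j :=
      (Finset.add_sum_erase _ _ (Finset.mem_univ i)).symm
    omega
  have hsumle : k ≤ ∑ j, μ j := le_trans hik (Finset.single_le_sum (f := μ)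
    (fun _ _ => Nat.zero_le _) (Finset.mem_univ i))
  -- abbreviations
  set c : ℕ := ∑ j : Fin n, (j : ℕ) with hc0
  set F : ℚ := ∏ j, ((μ j)! : ℚ) with hF0
  set F' : ℚ := ∏ j, ((μ' j)! : ℚ) with hF'0
  set W : ℚ := ∏ a : Fin n, ∏ b ∈ Finset.Ioi a, ((μ b : ℚ) - (μ a : ℚ)) with hW0
  set W' : ℚ := ∏ a : Fin n, ∏ b ∈ Finset.Ioi a, ((μ' b : ℚ) - (μ' a : ℚ)) with hW'0
  set σ : ℚ := ((Equiv.Perm.sign (Fin.revPerm : Equiv.Perm (Fin n)) : ℤ) : ℚ) with hσ0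
  have hFne : F ≠ 0 := by
    rw [hF0]
    exact Finset.prod_ne_zero_iff.mpr fun j _ => by positivity
  have hF'ne : F' ≠ 0 := by
    rw [hF'0]
    exact Finset.prod_ne_zero_iff.mpr fun j _ => by positivity
  have hchiF := chiTilde_formula n n μ
  have hchiF' := chiTilde_formula n (n - k) μ'
  rw [← hF0, ← hσ0, ← hW0, ← hc0] at hchiF
  rw [← hF'0, ← hσ0, ← hW'0, ← hc0] at hchiF'
  set num : ℚ := ∏ j ∈ Finset.univ.erase i, ((μ i : ℚ) - (μ j : ℚ) - (k : ℚ)) with hnum0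
  set den : ℚ := ∏ j ∈ Finset.univ.erase i, ((μ i : ℚ) - (μ j : ℚ)) with hden0
  have hdenne : den ≠ 0 := by
    rw [hden0]
    refine Finset.prod_ne_zero_iff.mpr fun j hj => ?_
    have : μ i ≠ μ j := fun h => (Finset.ne_of_mem_erase hj) (hdistinct h.symm)
    intro h
    exact this (Nat.cast_injective (sub_eq_zero.mp h))
  have hR : (∏ j ∈ Finset.univ.erase i, (((μ i : ℚ) - μ j - k) / ((μ i : ℚ) - μ j)))
      = num / den := by
    rw [hnum0, hden0, ← Finset.prod_div_distrib]
  rw [hR]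
  -- key Vandermonde ratio
  have hkey : W' * den = W * num := by
    rw [hW'0, hW0, hnum0, hden0]
    have := vandermonde_update (fun j => ((μ j : ℕ) : ℚ)) i (k : ℚ)
    rw [← hcast] at this
    exact this
  -- F = descFactorial (μ i) k * F'
  have hFF' : F = (Nat.descFactorial (μ i) k : ℚ) * F' := by
    rw [hF0, hF'0, ← Finset.mul_prod_erase Finset.univ _ (Finset.mem_univ i),
      ← Finset.mul_prod_erase Finset.univ (fun j => ((μ' j)! : ℚ)) (Finset.mem_univ i)]
    have h1 : ∏ j ∈ Finset.univ.erase i, ((μ' j)! : ℚ)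
        = ∏ j ∈ Finset.univ.erase i, ((μ j)! : ℚ) := by
      refine Finset.prod_congr rfl fun j hj => ?_
      rw [hμ', Function.update_of_ne (Finset.ne_of_mem_erase hj)]
    rw [h1, ← mul_assoc]
    congr 1
    have h2 : ((μ i)! : ℕ) = Nat.descFactorial (μ i) k * (μ i - k)! := by
      rw [mul_comm, Nat.factorial_mul_descFactorial hik]
    have h3 : μ' i = μ i - k := by rw [hμ', Function.update_self]
    rw [h3, ← Nat.cast_mul, ← h2]
  by_cases hcond : (∑ j, μ j) = n + c
  · -- main case
    have hcond' : (∑ j, μ' j) = (n - k) + c := by omega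
    rw [if_pos hcond] at hchiF
    rw [if_pos hcond'] at hchiF'
    -- goal : Dnk * chi' = chi * Dμ * (num / den)
    refine mul_right_cancel₀ (mul_ne_zero hF'ne hdenne) ?_
    have e1 : (Nat.descFactorial n k : ℚ) *
          (chiTilde n μ' (Multiset.replicate (n - k) 1) : ℚ) * (F' * den)
        = (Nat.descFactorial n k : ℚ) * (((n - k)! : ℚ) * σ) * (W' * den) := by
      rw [show (Nat.descFactorial n k : ℚ) * (chiTilde n μ' (Multiset.replicate (n - k) 1) : ℚ)
          * (F' * den) = (Nat.descFactorial n k : ℚ) *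
          ((chiTilde n μ' (Multiset.replicate (n - k) 1) : ℚ) * F') * den by ring, hchiF']
      ring
    have e2 : (chiTilde n μ (Multiset.replicate n 1) : ℚ) * (Nat.descFactorial (μ i) k : ℚ) *
          (num / den) * (F' * den)
        = ((n ! : ℚ) * σ) * (W * num) := by
      calc (chiTilde n μ (Multiset.replicate n 1) : ℚ) * (Nat.descFactorial (μ i) k : ℚ) *
            (num / den) * (F' * den)
          = ((chiTilde n μ (Multiset.replicate n 1) : ℚ) *
              ((Nat.descFactorial (μ i) k : ℚ) * F') * num) * (den / den) := by ring
        _ = (chiTilde n μ (Multiset.replicate n 1) : ℚ) * F * num := by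
              rw [div_self hdenne, ← hFF']; ring
        _ = ((n ! : ℚ) * σ) * (W * num) := by rw [hchiF]; ring
    rw [e1, e2, hkey]
    have hnk : (Nat.descFactorial n k : ℚ) * ((n - k)! : ℚ) = (n ! : ℚ) := by
      rw [← Nat.cast_mul, mul_comm, Nat.factorial_mul_descFactorial hkn]
    calc (Nat.descFactorial n k : ℚ) * (((n - k)! : ℚ) * σ) * (W * num)
        = ((Nat.descFactorial n k : ℚ) * ((n - k)! : ℚ)) * σ * (W * num) := by ring
      _ = ((n ! : ℚ) * σ) * (W * num) := by rw [hnk]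
  · -- degenerate case: both chiTilde vanish
    have hcond' : ¬ ((∑ j, μ' j) = (n - k) + c) := by omega
    rw [if_neg hcond] at hchiF
    rw [if_neg hcond'] at hchiF'
    have hchi0 : (chiTilde n μ (Multiset.replicate n 1) : ℚ) = 0 :=
      by
        rcases mul_eq_zero.mp hchiF with h | h
        · exact h
        · exact absurd h hFne
    have hchi'0 : (chiTilde n μ' (Multiset.replicate (n - k) 1) : ℚ) = 0 :=
      by
        rcases mul_eq_zero.mp hchiF' with h | h
        · exact h
        · exact absurd h hF'ne
    rw [hchi0, hchi'0, mul_zero, zero_mul, zero_mul]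
end
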